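/- arXiv:2004.09711 — 6 statements merged into one kernel-verified Lean document; each statement's English description precedes it below -/
import Mathlib

section
/- For any pair of disjoint subsets I, J of {1, …, r} with I ∪ J = {1, …, r}, the family {α_i^∨ : i ∈ I} ∪ {x_j : j ∈ J} is a basis of the dual space V^*. -/
/-! The simple reflections map the finite spanning set `Φ` into itself, so they lie in its
stabilizer, which is finite; averaging a positive definite form over it gives a form `B`
invariant under every simple reflection. Invariance under the reflection in `αₖ` forces
`αₖ^∨ = (2 / B(αₖ, αₖ)) • B(·, αₖ)`. Up to nonzero scalars the family is therefore
`{B(·, αᵢ) : i ∈ I} ∪ {xⱼ : j ∉ I}`, and a vanishing combination `∑ᵢ cᵢ B(·, αᵢ) + ∑ⱼ cⱼ xⱼ`,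
evaluated at `w = ∑_{i ∈ I} cᵢ αᵢ`, gives `B(w, w) = 0`, whence all `cᵢ` and then all `cⱼ`
vanish. -/

open Module Submodule MulAction Pointwise

lemma finite_stabilizer_of_span_eq_top {R M : Type*} [Semiring R] [AddCommMonoid M] [Module R M]
    {Φ : Set M} (hΦ : Φ.Finite) (hspan : span R Φ = ⊤) :
    Finite (stabilizer (M ≃ₗ[R] M) Φ) := by
  have := hΦ.to_subtype
  refine Finite.of_injective (fun g (v : Φ) ↦ (⟨g.1 v, (mem_stabilizer_set' hΦ).1 g.2 v.2⟩ : Φ))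
    fun g h hgh ↦ Subtype.ext <| LinearEquiv.toLinearMap_injective <|
      LinearMap.ext_on hspan fun v hv ↦ congrArg Subtype.val (congrFun hgh ⟨v, hv⟩)

section InvariantForm

variable {K V : Type*} [Field K] [LinearOrder K] [IsStrictOrderedRing K]
  [AddCommGroup V] [Module K V]

lemma exists_bilinForm_pos [Module.Finite K V] :
    ∃ B : LinearMap.BilinForm K V, ∀ v ≠ 0, 0 < B v v := by
  let b := Module.finBasis K V
  refine ⟨∑ i, (b.coord i).smulRight (b.coord i), fun v hv ↦ ?_⟩
  obtain ⟨i, hi⟩ := Finsupp.ne_iff.1 (b.repr.map_ne_zero_iff.2 hv)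
  simp only [LinearMap.sum_apply, LinearMap.smulRight_apply, Basis.coord_apply]
  exact Finset.sum_pos' (fun j _ ↦ mul_self_nonneg _) ⟨i, Finset.mem_univ i, mul_self_pos.2 hi⟩

lemma exists_invariant_bilinForm_pos [Module.Finite K V] (G : Subgroup (V ≃ₗ[K] V)) [Finite G] :
    ∃ B : LinearMap.BilinForm K V,
      (∀ v ≠ 0, 0 < B v v) ∧ ∀ g ∈ G, ∀ u v, B (g u) (g v) = B u v := by
  have := Fintype.ofFinite G
  obtain ⟨B₀, hB₀⟩ := exists_bilinForm_pos (K := K) (V := V)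
  refine ⟨∑ g : G, B₀.compl₁₂ (g.1 : V →ₗ[K] V) g.1, fun v hv ↦ ?_, fun h hh u v ↦ ?_⟩
  · simp only [LinearMap.sum_apply, LinearMap.compl₁₂_apply]
    exact Finset.sum_pos (fun g _ ↦ hB₀ _ (g.1.map_ne_zero_iff.2 hv)) Finset.univ_nonempty
  · simp only [LinearMap.sum_apply, LinearMap.compl₁₂_apply]
    exact Fintype.sum_equiv (Equiv.mulRight ⟨h, hh⟩) _ _ fun g ↦ rfl

end InvariantForm

lemma Module.Dual.eq_smul_flip_of_reflection_invariant {K V : Type*} [Field K] [AddCommGroup V]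
    [Module K V] {B : LinearMap.BilinForm K V} {x : V} {f : Dual K V} (hf : f x = 2)
    (hB : ∀ u v, B (reflection hf u) (reflection hf v) = B u v) (hx : B x x ≠ 0) :
    f = (2 / B x x) • B.flip x := by
  refine LinearMap.ext fun u ↦ ?_
  have h := hB u x
  simp only [reflection_apply, map_sub, map_smul, LinearMap.sub_apply, LinearMap.smul_apply,
    smul_eq_mul, hf] at h
  rw [LinearMap.smul_apply, LinearMap.BilinForm.flip_apply, smul_eq_mul, div_mul_eq_mul_div,
    eq_div_iff hx]
  linear_combination h

lemma linearIndependent_ite_flip_coord {R V ι : Type*} [CommRing R] [AddCommGroup V] [Module R V]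
    [Fintype ι] [DecidableEq ι] (b : Basis ι R V) {B : LinearMap.BilinForm R V}
    (hB : ∀ v, B v v = 0 → v = 0) (I : Finset ι) :
    LinearIndependent R (fun k ↦ if k ∈ I then B.flip (b k) else b.coord k) := by
  rw [Fintype.linearIndependent_iff]
  intro c hc
  have hc_apply (v : V) :
      ∑ k ∈ I, c k * B v (b k) + ∑ k ∈ Iᶜ, c k * b.coord k v = 0 := by
    simpa [apply_ite, Finset.sum_ite, Finset.filter_not, Finset.compl_eq_univ_sdiff]
      using LinearMap.congr_fun hc v
  have hcI : ∀ k ∈ I, c k = 0 := by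
    set w := ∑ k ∈ I, c k • b k
    have hcoord : ∀ k ∉ I, b.coord k w = 0 := fun k hk ↦ by simp [w, Finsupp.single_apply, hk]
    have hw : B w w = 0 :=
      calc B w w = ∑ k ∈ I, c k * B w (b k) := by simp [w]
        _ = 0 := by
          rw [← hc_apply w, Finset.sum_eq_zero (s := Iᶜ) fun k hk ↦ by
            rw [hcoord k (Finset.mem_compl.1 hk), mul_zero], add_zero]
    exact linearIndependent_iff'.1 b.linearIndependent I c (hB w hw)
  intro k
  by_cases hk : k ∈ I
  · exact hcI k hk
  · have := hc_apply (b k)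
    rwa [Finset.sum_eq_zero fun j hj ↦ by rw [hcI j hj, zero_mul], zero_add,
      Finset.sum_eq_single_of_mem k (Finset.mem_compl.2 hk) fun j _ hjk ↦ by simp [hjk],
      b.coord_apply, b.repr_self, Finsupp.single_eq_same, mul_one] at this

theorem stmt_0_general {V : Type*} [AddCommGroup V] [Module ℚ V] {r : ℕ}
    (b : Module.Basis (Fin r) ℚ V) (coroot : Fin r → Module.Dual ℚ V)
    (hdiag : ∀ i, coroot i (b i) = 2)
    (Φ : Set V) (hΦfin : Φ.Finite) (hΦroot : ∀ i, b i ∈ Φ)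
    (hΦrefl : ∀ β ∈ Φ, ∀ i, β - coroot i β • b i ∈ Φ)
    (x : Fin r → Module.Dual ℚ V)
    (hx : ∀ i j : Fin r, x j (b i) = if i = j then 1 else 0)
    (I : Finset (Fin r)) :
    ∃ d : Module.Basis (Fin r) ℚ (Module.Dual ℚ V),
      ∀ k : Fin r, d k = if k ∈ I then coroot k else x k := by
  have : Module.Finite ℚ V := .of_basis b
  have hspan : span ℚ Φ = ⊤ :=
    top_le_iff.1 <| b.span_eq ▸ span_mono (Set.range_subset_iff.2 hΦroot)
  have := finite_stabilizer_of_span_eq_top hΦfin hspan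
  obtain ⟨B, hBpos, hBinv⟩ := exists_invariant_bilinForm_pos (stabilizer (V ≃ₗ[ℚ] V) Φ)
  have hcoroot (k : Fin r) : coroot k = (2 / B (b k) (b k)) • B.flip (b k) :=
    Dual.eq_smul_flip_of_reflection_invariant (hdiag k)
      (hBinv _ <| (mem_stabilizer_set' hΦfin).2 fun β hβ ↦ by
        simpa [Module.reflection_apply] using hΦrefl β hβ k)
      (hBpos _ (b.ne_zero k)).ne'
  have hx_coord : x = b.coord := funext fun j ↦ b.ext fun i ↦ by
    simp [hx, Finsupp.single_apply, eq_comm]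
  have hli : LinearIndependent ℚ fun k ↦ if k ∈ I then coroot k else x k := by
    let scale (k : Fin r) : ℚˣ :=
      if k ∈ I then Units.mk0 _ (div_ne_zero two_ne_zero (hBpos _ (b.ne_zero k)).ne') else 1
    have hfamily : (fun k ↦ if k ∈ I then coroot k else x k) =
        scale • fun k ↦ if k ∈ I then B.flip (b k) else b.coord k := by
      funext k
      by_cases hk : k ∈ I <;> simp [scale, hk, hcoroot, hx_coord]
    rw [hfamily]
    exact (linearIndependent_ite_flip_coord b
      (fun v hv ↦ by_contra fun h ↦ (hBpos v h).ne' hv) I).units_smul scale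
  exact ⟨basisOfLinearIndependentOfCardEqFinrank' _ hli
    (finrank_eq_card_basis b.dualBasis).symm, fun k ↦ by simp⟩

/-- Let `b i` be the simple roots (a basis of `V`), `coroot i` the simple
coroots in the dual space, forming a crystallographic Cartan matrix, with a finite root
system `Φ` containing the simple roots and closed under the simple reflections, and let
`x j` be the fundamental coweights.  For any pair of disjoint subsets `I, J` of `{1, …, r}`
with `I ∪ J = {1, …, r}`, the family `{coroot i : i ∈ I} ∪ {x j : j ∈ J}` is a basis of the
dual space `V^*`. -/
theorem stmt_0 {V : Type*} [AddCommGroup V] [Module ℚ V] {r : ℕ}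
    (b : Module.Basis (Fin r) ℚ V) (coroot : Fin r → Module.Dual ℚ V)
    (hdiag : ∀ i, coroot i (b i) = 2)
    (hoff : ∀ i j : Fin r, i ≠ j → coroot j (b i) ≤ 0)
    (hint : ∀ i j : Fin r, ∃ n : ℤ, coroot j (b i) = (n : ℚ))
    (Φ : Set V) (hΦfin : Φ.Finite) (hΦroot : ∀ i, b i ∈ Φ)
    (hΦrefl : ∀ β ∈ Φ, ∀ i, β - coroot i β • b i ∈ Φ)
    (x : Fin r → Module.Dual ℚ V)
    (hx : ∀ i j : Fin r, x j (b i) = if i = j then 1 else 0)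
    (I J : Finset (Fin r)) (hdisj : Disjoint I J) (hcover : I ∪ J = Finset.univ) :
    ∃ d : Module.Basis (Fin r) ℚ (Module.Dual ℚ V),
      ∀ k : Fin r, d k = if k ∈ I then coroot k else x k :=
  stmt_0_general b coroot hdiag Φ hΦfin hΦroot hΦrefl x hx I
end

section
/- For disjoint subsets I, J with I ∪ J = {1, …, r} and any dominant weight λ, the vertex v_{I,J}(λ) equals the average (1/|W_I|) Σ_{w ∈ W_I} wλ over the parabolic Weyl subgroup W_I. -/
/-!
Let `π = ∑_{w ∈ W_I} w`. Since `π ∘ g = π` for `g ∈ W_I` and `s_i α_i = -α_i`, `π` kills every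
`α_i` with `i ∈ I`, hence the whole span of `{α_i : i ∈ I}`; it multiplies a `W_I`-fixed vector
by `|W_I|`. The conditions on `v` say exactly that `v` is fixed by every `s_i`, `i ∈ I` (so by
`W_I`), and that `λ - v` lies in that span. Hence `π λ = π v + π (λ - v) = |W_I| v`.
-/

open Module Finset

namespace Subgroup

variable {R M : Type*} [Ring R] [AddCommGroup M] [Module R M] {W : Subgroup (M ≃ₗ[R] M)}

theorem apply_eq_self_of_mem_closure {S : Set (M ≃ₗ[R] M)} {u : M} (h : ∀ g ∈ S, g u = u)
    {w : M ≃ₗ[R] M} (hw : w ∈ closure S) : w u = u :=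
  (closure_le (MulAction.stabilizer _ u)).2 h hw

variable (hW : (W : Set (M ≃ₗ[R] M)).Finite)

theorem sum_toFinset_apply_apply_of_mem {g : M ≃ₗ[R] M} (hg : g ∈ W) (u : M) :
    ∑ w ∈ hW.toFinset, w (g u) = ∑ w ∈ hW.toFinset, w u :=
  sum_equiv (Equiv.mulRight g) (fun w => by simp [W.mul_mem_cancel_right hg]) fun _ _ => rfl

theorem sum_toFinset_apply_of_forall_apply_eq {u : M} (hu : ∀ w ∈ W, w u = u) :
    ∑ w ∈ hW.toFinset, w u = #hW.toFinset • u := by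
  rw [sum_congr rfl fun w hw => hu w (hW.mem_toFinset.1 hw), sum_const]

theorem sum_toFinset_apply_eq_zero_of_mem_span [IsAddTorsionFree M] {S : Set M}
    (hS : ∀ y ∈ S, ∃ g ∈ W, g y = -y) {u : M} (hu : u ∈ Submodule.span R S) :
    ∑ w ∈ hW.toFinset, w u = 0 := by
  induction hu using Submodule.span_induction with
  | mem y hy =>
    obtain ⟨g, hg, hgy⟩ := hS y hy
    have hsum := sum_toFinset_apply_apply_of_mem hW hg y
    rw [hgy] at hsum
    simp only [map_neg, sum_neg_distrib] at hsum
    exact self_eq_neg.1 hsum.symm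
  | zero => simp
  | add y z _ _ hy hz => simp [sum_add_distrib, hy, hz]
  | smul a y _ hy => simp [← smul_sum, hy]

end Subgroup

theorem Module.Basis.mem_span_image_of_dual_eq_zero {ι R M : Type*} [DecidableEq ι] [CommRing R]
    [AddCommGroup M] [Module R M] (b : Basis ι R M) {x : ι → Dual R M}
    (hx : ∀ i j, x j (b i) = if i = j then 1 else 0) {s : Set ι} {u : M}
    (hu : ∀ j ∉ s, x j u = 0) : u ∈ Submodule.span R (b '' s) := by
  have hcoord : ∀ j, x j = b.coord j := fun j => b.ext fun i => by
    simp [hx, Finsupp.single_apply]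
  refine b.mem_span_image.2 fun j hj => by_contra fun hjs => ?_
  exact (Finsupp.mem_support_iff.1 hj) (by simpa [hcoord] using hu j hjs)

theorem stmt_5_general {V : Type*} [AddCommGroup V] [Module ℚ V] {r : ℕ}
    (b : Module.Basis (Fin r) ℚ V) (coroot : Fin r → Module.Dual ℚ V)
    (hdiag : ∀ i, coroot i (b i) = 2)
    (x : Fin r → Module.Dual ℚ V)
    (hx : ∀ i j : Fin r, x j (b i) = if i = j then 1 else 0)
    (I J : Finset (Fin r)) (hcover : I ∪ J = Finset.univ)
    (lam : V)
    (v : V) (hv1 : ∀ i ∈ I, coroot i v = 0) (hv2 : ∀ j ∈ J, x j (lam - v) = 0)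
    (W : Subgroup (V ≃ₗ[ℚ] V))
    (hW : W = Subgroup.closure
      {g : V ≃ₗ[ℚ] V | ∃ i ∈ I, ∀ u : V, g u = u - coroot i u • b i})
    (hWfin : (W : Set (V ≃ₗ[ℚ] V)).Finite) :
    v = (hWfin.toFinset.card : ℚ)⁻¹ • ∑ w ∈ hWfin.toFinset, w lam := by
  have hfix : ∀ w ∈ W, w v = v := by
    rw [hW]
    refine fun w => Subgroup.apply_eq_self_of_mem_closure ?_
    rintro g ⟨i, hi, hg⟩
    rw [hg, hv1 i hi, zero_smul, sub_zero]
  have hspan : lam - v ∈ Submodule.span ℚ (b '' I) := by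
    refine b.mem_span_image_of_dual_eq_zero hx fun j hj => hv2 j ?_
    exact (mem_union.1 (hcover.symm ▸ mem_univ j)).resolve_left hj
  have hrefl : ∀ y ∈ b '' I, ∃ g ∈ W, g y = -y := by
    rintro _ ⟨i, hi, rfl⟩
    refine ⟨reflection (hdiag i), ?_, reflection_apply_self _⟩
    exact hW ▸ Subgroup.subset_closure ⟨i, hi, fun _ => reflection_apply _ _⟩
  have : IsAddTorsionFree V := .of_module_rat V
  have hsum : ∑ w ∈ hWfin.toFinset, w lam = (#hWfin.toFinset : ℚ) • v := by
    calc ∑ w ∈ hWfin.toFinset, w lam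
        = ∑ w ∈ hWfin.toFinset, w v + ∑ w ∈ hWfin.toFinset, w (lam - v) := by
          simp only [← sum_add_distrib, ← map_add, add_sub_cancel]
      _ = (#hWfin.toFinset : ℚ) • v := by
        rw [Subgroup.sum_toFinset_apply_of_forall_apply_eq hWfin hfix,
          Subgroup.sum_toFinset_apply_eq_zero_of_mem_span hWfin hrefl hspan, add_zero,
          Nat.cast_smul_eq_nsmul]
  have hcard : (#hWfin.toFinset : ℚ) ≠ 0 :=
    Nat.cast_ne_zero.2 (card_ne_zero.2 ⟨1, by simp⟩)
  rw [hsum, inv_smul_smul₀ hcard]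

/-- For disjoint subsets `I, J` with `I ∪ J = {1, …, r}` and any dominant
weight `lam`, the vertex `v_{I,J}(lam)` (i.e. the point `v` with `⟨v, α_i^∨⟩ = 0` for
`i ∈ I` and `⟨lam − v, x_j⟩ = 0` for `j ∈ J`) equals the average
`(1/|W_I|) Σ_{w ∈ W_I} w(lam)` over the parabolic Weyl subgroup `W_I`, the subgroup of
linear automorphisms of `V` generated by the simple reflections `s_i`, `i ∈ I`. -/
theorem stmt_5 {V : Type*} [AddCommGroup V] [Module ℚ V] {r : ℕ}
    (b : Module.Basis (Fin r) ℚ V) (coroot : Fin r → Module.Dual ℚ V)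
    (hdiag : ∀ i, coroot i (b i) = 2)
    (hoff : ∀ i j : Fin r, i ≠ j → coroot j (b i) ≤ 0)
    (hint : ∀ i j : Fin r, ∃ n : ℤ, coroot j (b i) = (n : ℚ))
    (Φ : Set V) (hΦfin : Φ.Finite) (hΦroot : ∀ i, b i ∈ Φ)
    (hΦrefl : ∀ β ∈ Φ, ∀ i, β - coroot i β • b i ∈ Φ)
    (x : Fin r → Module.Dual ℚ V)
    (hx : ∀ i j : Fin r, x j (b i) = if i = j then 1 else 0)
    (I J : Finset (Fin r)) (hdisj : Disjoint I J) (hcover : I ∪ J = Finset.univ)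
    (lam : V) (hlam : ∀ i, 0 ≤ coroot i lam)
    (v : V) (hv1 : ∀ i ∈ I, coroot i v = 0) (hv2 : ∀ j ∈ J, x j (lam - v) = 0)
    (W : Subgroup (V ≃ₗ[ℚ] V))
    (hW : W = Subgroup.closure
      {g : V ≃ₗ[ℚ] V | ∃ i ∈ I, ∀ u : V, g u = u - coroot i u • b i})
    (hWfin : (W : Set (V ≃ₗ[ℚ] V)).Finite) :
    v = (hWfin.toFinset.card : ℚ)⁻¹ • ∑ w ∈ hWfin.toFinset, w lam :=
  stmt_5_general b coroot hdiag x hx I J hcover lam v hv1 hv2 W hW hWfin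
end

section
/- For dominant weights λ and μ, the intersection polytope of the sum is the Minkowski sum of the intersection polytopes: IP_{λ+μ} = {x + y : x ∈ IP_λ, y ∈ IP_μ}. -/
/-- The intersection polytope `IP_lam`: the set of dominant weights `μ` such that
`lam - μ` is a nonnegative rational combination of the simple roots. -/
def IP {V : Type*} [AddCommGroup V] [Module ℚ V] {r : ℕ}
    (b : Fin r → V) (coroot : Fin r → Module.Dual ℚ V) (lam : V) : Set V :=
  {μ | (∀ i, 0 ≤ coroot i μ) ∧
    ∃ c : Fin r → ℚ, (∀ i, 0 ≤ c i) ∧ lam - μ = ∑ i, c i • b i}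



namespace FMaux

noncomputable section

def isRat (x : ℝ) : Prop := ∃ q : ℚ, x = (q : ℝ)

lemma isRat_zero : isRat 0 := ⟨0, by norm_num⟩
lemma isRat_add {a b : ℝ} (ha : isRat a) (hb : isRat b) : isRat (a + b) := by
  obtain ⟨p, rfl⟩ := ha; obtain ⟨q, rfl⟩ := hb; exact ⟨p + q, by push_cast; ring⟩
lemma isRat_sub {a b : ℝ} (ha : isRat a) (hb : isRat b) : isRat (a - b) := by
  obtain ⟨p, rfl⟩ := ha; obtain ⟨q, rfl⟩ := hb; exact ⟨p - q, by push_cast; ring⟩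
lemma isRat_mul {a b : ℝ} (ha : isRat a) (hb : isRat b) : isRat (a * b) := by
  obtain ⟨p, rfl⟩ := ha; obtain ⟨q, rfl⟩ := hb; exact ⟨p * q, by push_cast; ring⟩
lemma isRat_div {a b : ℝ} (ha : isRat a) (hb : isRat b) : isRat (a / b) := by
  obtain ⟨p, rfl⟩ := ha; obtain ⟨q, rfl⟩ := hb; exact ⟨p / q, by push_cast; ring⟩
lemma isRat_sum {m : ℕ} (f : Fin m → ℝ) (h : ∀ i, isRat (f i)) : isRat (∑ i, f i) := by
  choose g hg using h
  exact ⟨∑ i, g i, by push_cast; exact Finset.sum_congr rfl fun i _ => hg i⟩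

variable {n : ℕ}

def eval (p : (Fin n → ℝ) × ℝ) (x : Fin n → ℝ) : ℝ := ∑ i, p.1 i * x i

def Sat (S : List ((Fin n → ℝ) × ℝ)) (x : Fin n → ℝ) : Prop := ∀ p ∈ S, eval p x ≤ p.2

def RatC (p : (Fin n → ℝ) × ℝ) : Prop := (∀ i, isRat (p.1 i)) ∧ isRat p.2

def Efront (p : (Fin (n + 1) → ℝ) × ℝ) (y : Fin n → ℝ) : ℝ := ∑ i, p.1 i.castSucc * y i

def front (p : (Fin (n + 1) → ℝ) × ℝ) : (Fin n → ℝ) × ℝ := (fun i => p.1 i.castSucc, p.2)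

def combo (u l : (Fin (n + 1) → ℝ) × ℝ) : (Fin n → ℝ) × ℝ :=
  (fun i => u.1 (Fin.last n) * l.1 i.castSucc - l.1 (Fin.last n) * u.1 i.castSucc,
   u.1 (Fin.last n) * l.2 - l.1 (Fin.last n) * u.2)

def elim (S : List ((Fin (n + 1) → ℝ) × ℝ)) : List ((Fin n → ℝ) × ℝ) :=
  (S.filter (fun p => decide (p.1 (Fin.last n) = 0))).map front ++
  (S.filter (fun p => decide (0 < p.1 (Fin.last n)))).flatMap (fun u =>
    (S.filter (fun p => decide (p.1 (Fin.last n) < 0))).map (combo u))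

lemma eval_front (p : (Fin (n + 1) → ℝ) × ℝ) (y : Fin n → ℝ) :
    eval (front p) y = Efront p y := rfl

lemma eval_snoc (p : (Fin (n + 1) → ℝ) × ℝ) (y : Fin n → ℝ) (t : ℝ) :
    eval p (Fin.snoc y t) = Efront p y + p.1 (Fin.last n) * t := by
  unfold eval Efront
  rw [Fin.sum_univ_castSucc]
  simp

lemma eval_init (p : (Fin (n + 1) → ℝ) × ℝ) (x : Fin (n + 1) → ℝ) :
    eval p x = Efront p (Fin.init x) + p.1 (Fin.last n) * x (Fin.last n) := by
  unfold eval Efront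
  rw [Fin.sum_univ_castSucc]
  simp [Fin.init]

lemma eval_combo (u l : (Fin (n + 1) → ℝ) × ℝ) (y : Fin n → ℝ) :
    eval (combo u l) y
      = u.1 (Fin.last n) * Efront l y - l.1 (Fin.last n) * Efront u y := by
  unfold eval combo Efront
  simp only [Finset.mul_sum]
  rw [← Finset.sum_sub_distrib]
  exact Finset.sum_congr rfl fun i _ => by ring

lemma mem_elim {S : List ((Fin (n + 1) → ℝ) × ℝ)} {p : (Fin n → ℝ) × ℝ} :
    p ∈ elim S ↔
      (∃ q ∈ S, q.1 (Fin.last n) = 0 ∧ p = front q) ∨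
      (∃ u ∈ S, 0 < u.1 (Fin.last n) ∧ ∃ l ∈ S, l.1 (Fin.last n) < 0 ∧ p = combo u l) := by
  simp only [elim, List.mem_append, List.mem_map, List.mem_flatMap, List.mem_filter,
    decide_eq_true_eq]
  constructor
  · rintro (⟨q, ⟨hq, h0⟩, rfl⟩ | ⟨u, ⟨hu, h0⟩, l, ⟨hl, h1⟩, rfl⟩)
    · exact Or.inl ⟨q, hq, h0, rfl⟩
    · exact Or.inr ⟨u, hu, h0, l, hl, h1, rfl⟩
  · rintro (⟨q, hq, h0, rfl⟩ | ⟨u, hu, h0, l, hl, h1, rfl⟩)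
    · exact Or.inl ⟨q, ⟨hq, h0⟩, rfl⟩
    · exact Or.inr ⟨u, ⟨hu, h0⟩, l, ⟨hl, h1⟩, rfl⟩

lemma sat_elim {S : List ((Fin (n + 1) → ℝ) × ℝ)} {x : Fin (n + 1) → ℝ} (h : Sat S x) :
    Sat (elim S) (Fin.init x) := by
  intro p hp
  rcases mem_elim.mp hp with ⟨q, hq, h0, rfl⟩ | ⟨u, hu, h0, l, hl, h1, rfl⟩
  · have := h q hq
    rw [eval_init] at this
    rw [eval_front]
    simpa [h0, front] using this
  · have hU := h u hu
    have hL := h l hl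
    rw [eval_init] at hU hL
    rw [eval_combo]
    show _ ≤ u.1 (Fin.last n) * l.2 - l.1 (Fin.last n) * u.2
    nlinarith [mul_le_mul_of_nonneg_left hL (le_of_lt h0),
      mul_le_mul_of_nonneg_left hU (le_of_lt (neg_pos.mpr h1))]

lemma ratC_elim {S : List ((Fin (n + 1) → ℝ) × ℝ)} (hS : ∀ p ∈ S, RatC p) :
    ∀ p ∈ elim S, RatC p := by
  intro p hp
  rcases mem_elim.mp hp with ⟨q, hq, h0, rfl⟩ | ⟨u, hu, h0, l, hl, h1, rfl⟩
  · exact ⟨fun i => (hS q hq).1 _, (hS q hq).2⟩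
  · refine ⟨fun i => isRat_sub (isRat_mul ((hS u hu).1 _) ((hS l hl).1 _))
      (isRat_mul ((hS l hl).1 _) ((hS u hu).1 _)), isRat_sub
      (isRat_mul ((hS u hu).1 _) (hS l hl).2) (isRat_mul ((hS l hl).1 _) (hS u hu).2)⟩

-- max/min of lists
def fmax : ℝ → List ℝ → ℝ
  | a, [] => a
  | a, x :: xs => max x (fmax a xs)

def fmin : ℝ → List ℝ → ℝ
  | a, [] => a
  | a, x :: xs => min x (fmin a xs)

lemma le_fmax {a x : ℝ} : ∀ {l : List ℝ}, x ∈ l → x ≤ fmax a l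
  | b :: bs, h => by
    rcases List.mem_cons.mp h with rfl | h
    · exact le_max_left _ _
    · exact le_trans (le_fmax h) (le_max_right _ _)

lemma fmax_mem (a : ℝ) : ∀ (l : List ℝ), fmax a l = a ∨ fmax a l ∈ l
  | [] => Or.inl rfl
  | b :: bs => by
    rcases max_choice b (fmax a bs) with h | h
    · exact Or.inr (by rw [fmax, h]; exact List.mem_cons_self)
    · rcases fmax_mem a bs with h2 | h2
      · exact Or.inl (by rw [fmax, h, h2])
      · exact Or.inr (by rw [fmax, h]; exact List.mem_cons_of_mem _ h2)

lemma fmin_le {a x : ℝ} : ∀ {l : List ℝ}, x ∈ l → fmin a l ≤ x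
  | b :: bs, h => by
    rcases List.mem_cons.mp h with rfl | h
    · exact min_le_left _ _
    · exact le_trans (min_le_right _ _) (fmin_le h)

lemma fmin_mem (a : ℝ) : ∀ (l : List ℝ), fmin a l = a ∨ fmin a l ∈ l
  | [] => Or.inl rfl
  | b :: bs => by
    rcases min_choice b (fmin a bs) with h | h
    · exact Or.inr (by rw [fmin, h]; exact List.mem_cons_self)
    · rcases fmin_mem a bs with h2 | h2
      · exact Or.inl (by rw [fmin, h, h2])
      · exact Or.inr (by rw [fmin, h]; exact List.mem_cons_of_mem _ h2)

lemma self_le_fmax {a : ℝ} : ∀ {l : List ℝ}, a ≤ fmax a l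
  | [] => le_refl a
  | b :: bs => le_trans self_le_fmax (le_max_right _ _)

lemma fmin_le_self {a : ℝ} : ∀ {l : List ℝ}, fmin a l ≤ a
  | [] => le_refl a
  | b :: bs => le_trans (min_le_right _ _) fmin_le_self

def pick : List ℝ → List ℝ → ℝ
  | a :: as, _ => fmax a as
  | [], b :: bs => fmin b bs
  | [], [] => 0

lemma pick_spec (lo up : List ℝ) (compat : ∀ a ∈ lo, ∀ b ∈ up, a ≤ b) :
    (∀ a ∈ lo, a ≤ pick lo up) ∧ (∀ b ∈ up, pick lo up ≤ b) ∧
      (pick lo up = 0 ∨ pick lo up ∈ lo ∨ pick lo up ∈ up) := by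
  match lo, up with
  | a :: as, up =>
    have hmem : fmax a as ∈ a :: as := by
      rcases fmax_mem a as with h | h
      · rw [h]; exact List.mem_cons_self
      · exact List.mem_cons_of_mem _ h
    refine ⟨?_, ?_, Or.inr (Or.inl hmem)⟩
    · intro x hx
      rcases List.mem_cons.mp hx with rfl | hx
      · exact self_le_fmax
      · exact le_fmax hx
    · intro b hb
      exact compat _ hmem _ hb
  | [], b :: bs =>
    have hmem : fmin b bs ∈ b :: bs := by
      rcases fmin_mem b bs with h | h
      · rw [h]; exact List.mem_cons_self
      · exact List.mem_cons_of_mem _ h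
    refine ⟨by simp, ?_, Or.inr (Or.inr hmem)⟩
    · intro x hx
      rcases List.mem_cons.mp hx with rfl | hx
      · exact fmin_le_self
      · exact fmin_le hx
  | [], [] => exact ⟨by simp, by simp, Or.inl rfl⟩

lemma sat_lift {S : List ((Fin (n + 1) → ℝ) × ℝ)} (hS : ∀ p ∈ S, RatC p)
    {y : Fin n → ℝ} (hy : ∀ i, isRat (y i)) (h : Sat (elim S) y) :
    ∃ t, isRat t ∧ Sat S (Fin.snoc y t) := by
  classical
  set lows : List ℝ := (S.filter (fun p => decide (p.1 (Fin.last n) < 0))).map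
    (fun l => (l.2 - Efront l y) / l.1 (Fin.last n)) with hlows
  set ups : List ℝ := (S.filter (fun p => decide (0 < p.1 (Fin.last n)))).map
    (fun u => (u.2 - Efront u y) / u.1 (Fin.last n)) with hups
  have compat : ∀ a ∈ lows, ∀ b ∈ ups, a ≤ b := by
    rintro a ha b hb
    simp only [hlows, hups, List.mem_map, List.mem_filter, decide_eq_true_eq] at ha hb
    obtain ⟨l, ⟨hlS, hl⟩, rfl⟩ := ha
    obtain ⟨u, ⟨huS, hu⟩, rfl⟩ := hb
    have hc : combo u l ∈ elim S := mem_elim.mpr (Or.inr ⟨u, huS, hu, l, hlS, hl, rfl⟩)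
    have := h _ hc
    rw [eval_combo] at this
    rw [le_div_iff₀ hu]
    have heq : (l.2 - Efront l y) / l.1 (Fin.last n) * u.1 (Fin.last n)
        = (l.2 - Efront l y) * u.1 (Fin.last n) / l.1 (Fin.last n) := by ring
    rw [heq, div_le_iff_of_neg hl]
    simp only [combo] at this
    show (u.2 - Efront u y) * l.1 (Fin.last n) ≤ _
    linarith
  obtain ⟨hlo, hup, hmem⟩ := pick_spec lows ups compat
  set t := pick lows ups with ht
  refine ⟨t, ?_, ?_⟩
  · have hratE : ∀ p ∈ S, isRat (Efront p y) := fun p hp =>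
      isRat_sum _ fun i => isRat_mul ((hS p hp).1 _) (hy i)
    rcases hmem with h0 | hm | hm
    · rw [h0]; exact isRat_zero
    · simp only [hlows, List.mem_map, List.mem_filter, decide_eq_true_eq] at hm
      obtain ⟨l, ⟨hlS, _⟩, heq⟩ := hm
      rw [← heq]
      exact isRat_div (isRat_sub (hS l hlS).2 (hratE l hlS)) ((hS l hlS).1 _)
    · simp only [hups, List.mem_map, List.mem_filter, decide_eq_true_eq] at hm
      obtain ⟨u, ⟨huS, _⟩, heq⟩ := hm
      rw [← heq]
      exact isRat_div (isRat_sub (hS u huS).2 (hratE u huS)) ((hS u huS).1 _)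
  · intro p hp
    rw [eval_snoc]
    rcases lt_trichotomy (p.1 (Fin.last n)) 0 with hq | hq | hq
    · have hmemlo : (p.2 - Efront p y) / p.1 (Fin.last n) ∈ lows := by
        simp only [hlows, List.mem_map, List.mem_filter, decide_eq_true_eq]
        exact ⟨p, ⟨hp, hq⟩, rfl⟩
      have := hlo _ hmemlo
      rw [div_le_iff_of_neg hq] at this
      linarith
    · have hf : front p ∈ elim S := mem_elim.mpr (Or.inl ⟨p, hp, hq, rfl⟩)
      have h2 : Efront p y ≤ p.2 := h _ hf
      rw [hq]
      linarith
    · have hmemup : (p.2 - Efront p y) / p.1 (Fin.last n) ∈ ups := by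
        simp only [hups, List.mem_map, List.mem_filter, decide_eq_true_eq]
        exact ⟨p, ⟨hp, hq⟩, rfl⟩
      have := hup _ hmemup
      rw [le_div_iff₀ hq] at this
      linarith

theorem fm_rat : ∀ (n : ℕ) (S : List ((Fin n → ℝ) × ℝ)), (∀ p ∈ S, RatC p) →
    (∃ x, Sat S x) → ∃ ξ : Fin n → ℚ, Sat S (fun i => (ξ i : ℝ))
  | 0, S, _, ⟨x, hx⟩ => ⟨fun i => 0, by
      have : (fun i : Fin 0 => ((0 : ℚ) : ℝ)) = x := funext fun i => i.elim0
      rw [this]; exact hx⟩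
  | n + 1, S, hS, ⟨x, hx⟩ => by
    obtain ⟨ξ', hξ'⟩ := fm_rat n (elim S) (ratC_elim hS) ⟨Fin.init x, sat_elim hx⟩
    obtain ⟨t, ⟨q, rfl⟩, hsat⟩ :=
      sat_lift hS (y := fun i => ((ξ' i : ℝ))) (fun i => ⟨ξ' i, rfl⟩) hξ'
    refine ⟨Fin.snoc ξ' q, ?_⟩
    have : (fun i => ((Fin.snoc ξ' q : Fin (n + 1) → ℚ) i : ℝ))
        = Fin.snoc (fun i => ((ξ' i : ℝ))) ((q : ℝ)) := by
      funext i
      induction i using Fin.lastCases with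
      | last => simp
      | cast j => simp
    rw [this]
    exact hsat

end
end FMaux


lemma real_feas {r : ℕ} (B : Fin r → Fin r → ℝ) (c L M : Fin r → ℝ)
    (hdiag : ∀ j, 0 < B j j) (hoff : ∀ i j, i ≠ j → B i j ≤ 0)
    (hc : ∀ i, 0 ≤ c i) (hL : ∀ j, 0 ≤ L j) (hM : ∀ j, 0 ≤ M j)
    (hcon : ∀ j, ∑ i, c i * B i j ≤ L j + M j) :
    ∃ a : Fin r → ℝ, (∀ i, 0 ≤ a i) ∧ (∀ i, a i ≤ c i) ∧ (∀ j, ∑ i, a i * B i j ≤ L j) ∧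
      (∀ j, (∑ i, c i * B i j) - ∑ i, a i * B i j ≤ M j) := by
  classical
  set K : Set (Fin r → ℝ) :=
    Set.Icc 0 c ∩ {a | ∀ j, ∑ i, a i * B i j ≤ L j} with hK
  have hKc : IsCompact K := by
    apply IsCompact.inter_right isCompact_Icc
    have : {a : Fin r → ℝ | ∀ j, ∑ i, a i * B i j ≤ L j}
        = ⋂ j, {a : Fin r → ℝ | ∑ i, a i * B i j ≤ L j} := by
      ext a; simp
    rw [this]
    exact isClosed_iInter fun j => isClosed_le
      (by continuity) continuous_const
  have h0K : (0 : Fin r → ℝ) ∈ K := by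
    constructor
    · exact ⟨le_refl _, fun i => hc i⟩
    · intro j; simp [hL j]
  have hφ : Continuous (fun a : Fin r → ℝ => ∑ i, a i) := by continuity
  obtain ⟨a, haK, hmax⟩ := hKc.exists_isMaxOn ⟨0, h0K⟩ hφ.continuousOn
  obtain ⟨⟨ha0', hac'⟩, haL⟩ := haK
  have ha0 : ∀ i, 0 ≤ a i := fun i => by simpa using ha0' i
  have hac : ∀ i, a i ≤ c i := fun i => hac' i
  refine ⟨a, ha0, hac, haL, ?_⟩
  intro j
  by_contra hgt
  push_neg at hgt
  -- hgt : M j < ∑ c i B i j − ∑ a i B i j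
  have hsub : (∑ i, c i * B i j) - ∑ i, a i * B i j = ∑ i, (c i - a i) * B i j := by
    rw [← Finset.sum_sub_distrib]
    exact Finset.sum_congr rfl fun i _ => by ring
  have hDj : ∑ i, (c i - a i) * B i j ≤ (c j - a j) * B j j := by
    have h1 : ∑ i ∈ Finset.univ.erase j, (c i - a i) * B i j ≤ 0 :=
      Finset.sum_nonpos fun i hi =>
        mul_nonpos_of_nonneg_of_nonpos (sub_nonneg.mpr (hac i))
          (hoff i j (Finset.ne_of_mem_erase hi))
    have h2 : (c j - a j) * B j j + ∑ i ∈ Finset.univ.erase j, (c i - a i) * B i j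
        = ∑ i, (c i - a i) * B i j :=
      Finset.add_sum_erase _ (fun i => (c i - a i) * B i j) (Finset.mem_univ j)
    linarith
  have hpos : 0 < (c j - a j) * B j j := by
    rw [hsub] at hgt
    linarith [hM j, hDj]
  have hacj : a j < c j := by nlinarith [hdiag j, hac j]
  have hslack : ∑ i, a i * B i j < L j := by
    have := hcon j
    linarith [hgt, hM j]
  set ε : ℝ := min (c j - a j) ((L j - ∑ i, a i * B i j) / B j j) with hε
  have hεpos : 0 < ε :=
    lt_min (by linarith) (div_pos (by linarith) (hdiag j))
  have hεle1 : ε ≤ c j - a j := by rw [hε]; exact min_le_left _ _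
  have hεle2 : ε ≤ (L j - ∑ i, a i * B i j) / B j j := by rw [hε]; exact min_le_right _ _
  set a' : Fin r → ℝ := Function.update a j (a j + ε) with ha'
  have hsum : ∀ (f : Fin r → ℝ), ∑ i, a' i * f i = (∑ i, a i * f i) + ε * f j := by
    intro f
    have h1 : ∀ i, a' i * f i = a i * f i + (if i = j then ε * f j else 0) := by
      intro i
      by_cases h : i = j
      · subst h; simp [ha', Function.update_self]; ring
      · simp [ha', Function.update_of_ne h, h]
    rw [Finset.sum_congr rfl fun i _ => h1 i, Finset.sum_add_distrib,
      Finset.sum_ite_eq' Finset.univ j]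
    simp
  have ha'K : a' ∈ K := by
    refine ⟨⟨fun i => ?_, fun i => ?_⟩, fun k => ?_⟩
    · show (0 : Fin r → ℝ) i ≤ a' i
      rw [Pi.zero_apply]
      by_cases h : i = j
      · subst h; rw [ha', Function.update_self]; linarith [ha0 i]
      · rw [ha', Function.update_of_ne h]; exact ha0 i
    · show a' i ≤ c i
      by_cases h : i = j
      · subst h; rw [ha', Function.update_self]; linarith
      · rw [ha', Function.update_of_ne h]; exact hac i
    · show ∑ i, a' i * B i k ≤ L k
      rw [hsum]
      by_cases h : k = j
      · subst h
        have h3 : ε * B k k ≤ L k - ∑ i, a i * B i k := by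
          rw [← div_mul_cancel₀ (L k - ∑ i, a i * B i k) (ne_of_gt (hdiag k))]
          exact mul_le_mul_of_nonneg_right hεle2 (le_of_lt (hdiag k))
        linarith
      · have : ε * B j k ≤ 0 :=
          mul_nonpos_of_nonneg_of_nonpos (le_of_lt hεpos) (hoff j k (Ne.symm h))
        linarith [haL k]
  have : (∑ i, a' i) ≤ ∑ i, a i := hmax ha'K
  have hsum1 : ∑ i, a' i = (∑ i, a i) + ε := by
    have := hsum (fun _ => 1)
    simpa using this
  linarith

open FMaux in
lemma key_rat {r : ℕ} (B : Fin r → Fin r → ℚ) (c L M : Fin r → ℚ)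
    (hdiag : ∀ j, 0 < B j j) (hoff : ∀ i j, i ≠ j → B i j ≤ 0)
    (hc : ∀ i, 0 ≤ c i) (hL : ∀ j, 0 ≤ L j) (hM : ∀ j, 0 ≤ M j)
    (hcon : ∀ j, ∑ i, c i * B i j ≤ L j + M j) :
    ∃ a : Fin r → ℚ, (∀ i, 0 ≤ a i) ∧ (∀ i, a i ≤ c i) ∧ (∀ j, ∑ i, a i * B i j ≤ L j) ∧
      (∀ j, (∑ i, c i * B i j) - (∑ i, a i * B i j) ≤ M j) := by
  classical
  set S : List ((Fin r → ℝ) × ℝ) := (List.finRange r).flatMap fun j =>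
    [ (fun i => if i = j then (-1 : ℝ) else 0, (0 : ℝ)),
      (fun i => if i = j then (1 : ℝ) else 0, ((c j : ℝ))),
      (fun i => ((B i j : ℝ)), ((L j : ℝ))),
      (fun i => -((B i j : ℝ)), ((M j : ℝ)) - ∑ i, (c i : ℝ) * (B i j : ℝ)) ] with hS
  have sat_iff : ∀ x : Fin r → ℝ, (∀ p ∈ S, (∑ i, p.1 i * x i) ≤ p.2) ↔
      ((∀ j, 0 ≤ x j) ∧ (∀ j, x j ≤ (c j : ℝ)) ∧
       (∀ j, ∑ i, (B i j : ℝ) * x i ≤ (L j : ℝ)) ∧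
       (∀ j, (∑ i, (c i : ℝ) * (B i j : ℝ)) - ∑ i, (B i j : ℝ) * x i ≤ (M j : ℝ))) := by
    intro x
    constructor
    · intro h
      refine ⟨fun j => ?_, fun j => ?_, fun j => ?_, fun j => ?_⟩
      · have := h _ (List.mem_flatMap.mpr ⟨j, List.mem_finRange j, by simp⟩ :
          (fun i => if i = j then (-1 : ℝ) else 0, (0 : ℝ)) ∈ S)
        simp only [ite_mul, neg_one_mul, zero_mul, Finset.sum_ite_eq', Finset.mem_univ,
          if_true] at this
        linarith
      · have := h _ (List.mem_flatMap.mpr ⟨j, List.mem_finRange j, by simp⟩ :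
          (fun i => if i = j then (1 : ℝ) else 0, ((c j : ℝ))) ∈ S)
        simp only [ite_mul, one_mul, zero_mul, Finset.sum_ite_eq', Finset.mem_univ,
          if_true] at this
        linarith
      · have := h _ (List.mem_flatMap.mpr ⟨j, List.mem_finRange j, by simp⟩ :
          ((fun i => ((B i j : ℝ))), ((L j : ℝ))) ∈ S)
        exact this
      · have := h _ (List.mem_flatMap.mpr ⟨j, List.mem_finRange j, by simp⟩ :
          ((fun i => -((B i j : ℝ))), ((M j : ℝ)) - ∑ i, (c i : ℝ) * (B i j : ℝ)) ∈ S)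
        simp only [neg_mul, Finset.sum_neg_distrib] at this
        linarith [this]
    · rintro ⟨h1, h2, h3, h4⟩ p hp
      rw [hS] at hp
      obtain ⟨j, -, hp4⟩ := List.mem_flatMap.mp hp
      simp only [List.mem_cons, List.not_mem_nil, or_false] at hp4
      rcases hp4 with rfl | rfl | rfl | rfl
      · simp only [ite_mul, neg_one_mul, zero_mul, Finset.sum_ite_eq', Finset.mem_univ,
          if_true]
        linarith [h1 j]
      · simp only [ite_mul, one_mul, zero_mul, Finset.sum_ite_eq', Finset.mem_univ, if_true]
        exact h2 j
      · exact h3 j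
      · simp only [neg_mul, Finset.sum_neg_distrib]
        linarith [h4 j]
  have hratS : ∀ p ∈ S, (∀ i, isRat (p.1 i)) ∧ isRat p.2 := by
    intro p hp
    rw [hS] at hp
    obtain ⟨j, -, hp4⟩ := List.mem_flatMap.mp hp
    simp only [List.mem_cons, List.not_mem_nil, or_false] at hp4
    rcases hp4 with rfl | rfl | rfl | rfl
    · exact ⟨fun i => ⟨if i = j then -1 else 0, by by_cases h : i = j <;> simp [h]⟩, ⟨0, by norm_num⟩⟩
    · exact ⟨fun i => ⟨if i = j then 1 else 0, by by_cases h : i = j <;> simp [h]⟩, ⟨c j, rfl⟩⟩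
    · exact ⟨fun i => ⟨B i j, rfl⟩, ⟨L j, rfl⟩⟩
    · exact ⟨fun i => ⟨-B i j, by push_cast; ring⟩,
        ⟨M j - ∑ i, c i * B i j, by push_cast; ring⟩⟩
  have hfeas : ∃ x : Fin r → ℝ, ∀ p ∈ S, (∑ i, p.1 i * x i) ≤ p.2 := by
    obtain ⟨a, ha0, hac, haL, haM⟩ := real_feas (fun i j => ((B i j : ℝ))) (fun i => (c i : ℝ))
      (fun j => (L j : ℝ)) (fun j => (M j : ℝ))
      (fun j => show (0:ℝ) < ((B j j : ℚ) : ℝ) by exact_mod_cast hdiag j)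
      (fun i j hij => show ((B i j : ℚ) : ℝ) ≤ 0 by exact_mod_cast hoff i j hij)
      (fun i => show (0:ℝ) ≤ ((c i : ℚ) : ℝ) by exact_mod_cast hc i)
      (fun j => show (0:ℝ) ≤ ((L j : ℚ) : ℝ) by exact_mod_cast hL j)
      (fun j => show (0:ℝ) ≤ ((M j : ℚ) : ℝ) by exact_mod_cast hM j)
      (fun j => show (∑ i, ((c i : ℚ) : ℝ) * ((B i j : ℚ) : ℝ)) ≤ ((L j : ℚ):ℝ) + ((M j : ℚ):ℝ) by
        exact_mod_cast hcon j)
    refine ⟨a, (sat_iff a).mpr ⟨ha0, hac, ?_, ?_⟩⟩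
    · intro j
      have := haL j
      calc ∑ i, ((B i j : ℝ)) * a i = ∑ i, a i * (B i j : ℝ) :=
            Finset.sum_congr rfl fun i _ => mul_comm _ _
        _ ≤ _ := this
    · intro j
      have h5 := haM j
      have h6 : ∑ i, ((B i j : ℝ)) * a i = ∑ i, a i * (B i j : ℝ) :=
        Finset.sum_congr rfl fun i _ => mul_comm _ _
      rw [h6]
      exact h5
  obtain ⟨ξ, hξ⟩ := fm_rat r S hratS hfeas
  obtain ⟨g1, g2, g3, g4⟩ := (sat_iff _).mp hξ
  refine ⟨ξ, fun i => by exact_mod_cast g1 i, fun i => by exact_mod_cast g2 i,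
    fun j => ?_, fun j => ?_⟩
  · have := g3 j
    have heq : ∑ i, ((B i j : ℝ)) * ((ξ i : ℝ)) = ((∑ i, ξ i * B i j : ℚ) : ℝ) := by
      push_cast
      exact Finset.sum_congr rfl fun i _ => mul_comm _ _
    rw [heq] at this
    exact_mod_cast this
  · have := g4 j
    have heq : ∑ i, ((B i j : ℝ)) * ((ξ i : ℝ)) = ((∑ i, ξ i * B i j : ℚ) : ℝ) := by
      push_cast
      exact Finset.sum_congr rfl fun i _ => mul_comm _ _
    have heq2 : ∑ i, ((c i : ℝ)) * ((B i j : ℝ)) = ((∑ i, c i * B i j : ℚ) : ℝ) := by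
      push_cast; ring
    rw [heq, heq2] at this
    exact_mod_cast this


/-- For dominant weights `lam` and `mu`, the intersection polytope of the
sum is the Minkowski sum of the intersection polytopes:
`IP_{lam+mu} = {u + w : u ∈ IP_lam, w ∈ IP_mu}`. -/
theorem stmt_7 {V : Type*} [AddCommGroup V] [Module ℚ V] {r : ℕ}
    (b : Module.Basis (Fin r) ℚ V) (coroot : Fin r → Module.Dual ℚ V)
    (hdiag : ∀ i, coroot i (b i) = 2)
    (hoff : ∀ i j : Fin r, i ≠ j → coroot j (b i) ≤ 0)
    (hint : ∀ i j : Fin r, ∃ n : ℤ, coroot j (b i) = (n : ℚ))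
    (Φ : Set V) (hΦfin : Φ.Finite) (hΦroot : ∀ i, b i ∈ Φ)
    (hΦrefl : ∀ β ∈ Φ, ∀ i, β - coroot i β • b i ∈ Φ)
    (lam mu : V) (hlam : ∀ i, 0 ≤ coroot i lam) (hmu : ∀ i, 0 ≤ coroot i mu) :
    IP (⇑b) coroot (lam + mu) =
      {z : V | ∃ u ∈ IP (⇑b) coroot lam, ∃ w ∈ IP (⇑b) coroot mu, z = u + w} := by
  ext ν
  simp only [IP, Set.mem_setOf_eq]
  constructor
  · rintro ⟨hdom, c, hc, hrel⟩
    set Bm : Fin r → Fin r → ℚ := fun i j => coroot j (b i) with hBm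
    have hdiagpos : ∀ j, 0 < Bm j j := fun j => by
      have : Bm j j = 2 := hdiag j
      rw [this]; norm_num
    have hoff' : ∀ i j, i ≠ j → Bm i j ≤ 0 := fun i j h => hoff i j h
    have hcomp : ∀ (d : Fin r → ℚ) (j : Fin r),
        coroot j (∑ i, d i • b i) = ∑ i, d i * Bm i j := by
      intro d j
      rw [map_sum]
      exact Finset.sum_congr rfl fun i _ => by rw [map_smul, smul_eq_mul]
    have hce : ∀ j, coroot j lam + coroot j mu - coroot j ν = ∑ i, c i * Bm i j := by
      intro j
      have h := congrArg (coroot j) hrel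
      rw [map_sub, map_add, hcomp] at h
      exact h
    have hcon : ∀ j, ∑ i, c i * Bm i j ≤ coroot j lam + coroot j mu := by
      intro j
      have := hce j
      linarith [hdom j]
    obtain ⟨a, ha0, hac, haL, haM⟩ := key_rat Bm c (fun j => coroot j lam)
      (fun j => coroot j mu) hdiagpos hoff' hc hlam hmu hcon
    refine ⟨lam - ∑ i, a i • b i, ⟨?_, a, ha0, by abel⟩,
      ν - (lam - ∑ i, a i • b i), ⟨?_, fun i => c i - a i,
        fun i => show (0:ℚ) ≤ c i - a i by linarith [hac i], ?_⟩, by abel⟩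
    · intro j
      have h1 : coroot j (lam - ∑ i, a i • b i) = coroot j lam - ∑ i, a i * Bm i j := by
        rw [map_sub, hcomp]
      rw [h1]
      linarith [haL j]
    · intro j
      have e1 : coroot j (ν - (lam - ∑ i, a i • b i))
          = coroot j ν - coroot j lam + ∑ i, a i * Bm i j := by
        rw [map_sub, map_sub, hcomp]; ring
      rw [e1]
      have := haM j
      have := hce j
      linarith
    · have h2 : ∑ i, (c i - a i) • b i = (∑ i, c i • b i) - ∑ i, a i • b i := by
        rw [← Finset.sum_sub_distrib]
        exact Finset.sum_congr rfl fun i _ => sub_smul _ _ _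
      rw [h2, ← hrel]
      abel
  · rintro ⟨u, ⟨hu, p, hp0, hpu⟩, w, ⟨hw, q, hq0, hqw⟩, rfl⟩
    refine ⟨fun i => by rw [map_add]; exact add_nonneg (hu i) (hw i),
      fun i => p i + q i, fun i => add_nonneg (hp0 i) (hq0 i), ?_⟩
    have h3 : lam + mu - (u + w) = (lam - u) + (mu - w) := by abel
    rw [h3, hpu, hqw, ← Finset.sum_add_distrib]
    exact Finset.sum_congr rfl fun i _ => (add_smul _ _ _).symm
end

section
/- For every index i and every pair of disjoint subsets I, J with I ∪ J = {1, …, r}, the pair (ϖ_i, v_{I,J}(ϖ_i)) spans an extremal ray of the Kostka cone 𝒦. -/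
/-!
Since `Φ` is finite and stable under the simple reflections, these generate a finite monoid
of endomorphisms, and averaging the standard form of the basis over it gives a positive
definite form `B` invariant under every simple reflection, so that
`⟨u, α_i^∨⟩ = 2 B(u, α_i) / B(α_i, α_i)`. Hence a vector `w` whose `j`-th coordinate and
`j`-th coroot pairing have opposite signs (or one vanishes) for every `j` has `B(w, w) ≤ 0`,
so `w = 0`. Applied to the negative part of `λ - v`, this shows that `λ - v` is a nonnegative
combination of simple roots; applied to differences, it shows that a vector is determined by
its coroot pairings at the indices of `I` and its coordinates at the indices of `J`. In a
decomposition `(ϖ_i, v) = p + q` inside `𝒦`, dominance forces the coroot pairings of `p`,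
and nonnegativity of `p.1 - p.2` its coordinates along `J`, to be proportional to those of
`(ϖ_i, v)`.
-/

/-- The Kostka cone `𝒦 ⊆ V × V`: pairs `(lam, mu)` of dominant weights such that
`lam - mu` is a nonnegative rational combination of the simple roots. -/
def Kostka {V : Type*} [AddCommGroup V] [Module ℚ V] {r : ℕ}
    (b : Fin r → V) (coroot : Fin r → Module.Dual ℚ V) : Set (V × V) :=
  {p | (∀ i, 0 ≤ coroot i p.1) ∧ (∀ i, 0 ≤ coroot i p.2) ∧
    ∃ c : Fin r → ℚ, (∀ i, 0 ≤ c i) ∧ p.1 - p.2 = ∑ i, c i • b i}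

open Module

section

variable {V : Type*} [AddCommGroup V] [Module ℚ V] {r : ℕ}

theorem mem_Kostka_iff (b : Basis (Fin r) ℚ V) (coroot : Fin r → Dual ℚ V) (p : V × V) :
    p ∈ Kostka (⇑b) coroot ↔
      (∀ i, 0 ≤ coroot i p.1) ∧ (∀ i, 0 ≤ coroot i p.2) ∧ ∀ i, 0 ≤ b.repr (p.1 - p.2) i := by
  refine and_congr_right' (and_congr_right' ⟨?_, fun h => ⟨_, h, (b.sum_repr _).symm⟩⟩)
  rintro ⟨c, hc, hp⟩ i
  rw [hp, b.repr_sum_self]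
  exact hc i

theorem coroot_nonpos_of_repr_nonneg (b : Basis (Fin r) ℚ V) (coroot : Fin r → Dual ℚ V)
    (hoff : ∀ i j : Fin r, i ≠ j → coroot j (b i) ≤ 0) {u : V} {i : Fin r}
    (hu : ∀ k, 0 ≤ b.repr u k) (hi : b.repr u i = 0) : coroot i u ≤ 0 := by
  rw [← b.sum_repr u, map_sum]
  refine Finset.sum_nonpos fun k _ => ?_
  rw [map_smul, smul_eq_mul]
  obtain rfl | hk := eq_or_ne k i
  · simp [hi]
  · exact mul_nonpos_of_nonneg_of_nonpos (hu k) (hoff k i hk)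

noncomputable def simpleReflection (b : Fin r → V) (coroot : Fin r → Dual ℚ V) (i : Fin r) :
    End ℚ V :=
  LinearMap.id - (coroot i).smulRight (b i)

theorem simpleReflection_apply (b : Fin r → V) (coroot : Fin r → Dual ℚ V) (i : Fin r)
    (u : V) : simpleReflection b coroot i u = u - coroot i u • b i :=
  rfl

theorem simpleReflection_mul_self (b : Fin r → V) (coroot : Fin r → Dual ℚ V) {i : Fin r}
    (hi : coroot i (b i) = 2) : simpleReflection b coroot i * simpleReflection b coroot i = 1 := by
  ext u
  change simpleReflection b coroot i (simpleReflection b coroot i u) = u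
  simp only [simpleReflection_apply, map_sub, map_smul, hi]
  module

noncomputable def reflectionMonoid (b : Fin r → V) (coroot : Fin r → Dual ℚ V) :
    Submonoid (End ℚ V) :=
  Submonoid.closure (Set.range (simpleReflection b coroot))

theorem mapsTo_of_mem_reflectionMonoid (b : Fin r → V) (coroot : Fin r → Dual ℚ V) {Φ : Set V}
    (hΦrefl : ∀ β ∈ Φ, ∀ i, β - coroot i β • b i ∈ Φ) {g : End ℚ V}
    (hg : g ∈ reflectionMonoid b coroot) : Set.MapsTo g Φ Φ := by
  induction hg using Submonoid.closure_induction with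
  | mem g hg =>
    obtain ⟨i, rfl⟩ := hg
    exact fun β hβ => hΦrefl β hβ i
  | one => exact Set.mapsTo_id Φ
  | mul g g' _ _ ih ih' => exact ih.comp ih'

theorem reflectionMonoid_finite (b : Basis (Fin r) ℚ V) (coroot : Fin r → Dual ℚ V) {Φ : Set V}
    (hΦfin : Φ.Finite) (hΦroot : ∀ i, b i ∈ Φ) (hΦrefl : ∀ β ∈ Φ, ∀ i, β - coroot i β • b i ∈ Φ) :
    (reflectionMonoid (⇑b) coroot : Set (End ℚ V)).Finite := by
  have hinj : Function.Injective fun (g : End ℚ V) i => g (b i) :=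
    fun g g' h => b.ext fun i => congrFun h i
  refine ((Set.Finite.pi fun _ => hΦfin).preimage hinj.injOn).subset fun g hg i _ => ?_
  exact mapsTo_of_mem_reflectionMonoid (⇑b) coroot hΦrefl hg (hΦroot i)

noncomputable def averagedForm (b : Basis (Fin r) ℚ V) (G : Finset (End ℚ V)) :
    LinearMap.BilinForm ℚ V :=
  ∑ g ∈ G, ∑ i, (b.coord i ∘ₗ g).smulRight (b.coord i ∘ₗ g)

theorem averagedForm_apply (b : Basis (Fin r) ℚ V) (G : Finset (End ℚ V)) (u w : V) :
    averagedForm b G u w = ∑ g ∈ G, ∑ i, b.repr (g u) i * b.repr (g w) i := by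
  simp only [averagedForm, LinearMap.sum_apply, LinearMap.smulRight_apply, LinearMap.smul_apply,
    LinearMap.comp_apply, Basis.coord_apply, smul_eq_mul]

theorem averagedForm_self_pos (b : Basis (Fin r) ℚ V) {G : Finset (End ℚ V)} (h1 : 1 ∈ G)
    {u : V} (hu : u ≠ 0) : 0 < averagedForm b G u u := by
  obtain ⟨i, hi⟩ : ∃ i, b.repr u i ≠ 0 := by
    by_contra! h
    exact hu (b.ext_elem fun i => by simp [h i])
  rw [averagedForm_apply]
  calc 0 < ∑ i, b.repr u i * b.repr u i :=
        Finset.sum_pos' (fun i _ => mul_self_nonneg _) ⟨i, Finset.mem_univ i, mul_self_pos.2 hi⟩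
    _ ≤ ∑ g ∈ G, ∑ i, b.repr (g u) i * b.repr (g u) i := by
        have := Finset.single_le_sum (f := fun g : End ℚ V => ∑ i, b.repr (g u) i * b.repr (g u) i)
          (fun g _ => Finset.sum_nonneg fun i _ => mul_self_nonneg _) h1
        rwa [End.one_apply] at this

theorem averagedForm_apply_apply (b : Basis (Fin r) ℚ V) {G : Finset (End ℚ V)}
    {s : End ℚ V} (hs : s * s = 1) (hG : ∀ g ∈ G, g * s ∈ G) (u w : V) :
    averagedForm b G (s u) (s w) = averagedForm b G u w := by
  simp only [averagedForm_apply]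
  exact Finset.sum_nbij' (· * s) (· * s) hG hG (fun g _ => by rw [mul_assoc, hs, mul_one])
    (fun g _ => by rw [mul_assoc, hs, mul_one]) fun g _ => rfl

structure IsCorootForm (b : Fin r → V) (coroot : Fin r → Dual ℚ V)
    (B : LinearMap.BilinForm ℚ V) : Prop where
  pos : ∀ u, u ≠ 0 → 0 < B u u
  two_mul_apply : ∀ i u, 2 * B u (b i) = coroot i u * B (b i) (b i)

theorem exists_isCorootForm (b : Basis (Fin r) ℚ V) (coroot : Fin r → Dual ℚ V)
    (hdiag : ∀ i, coroot i (b i) = 2) {Φ : Set V} (hΦfin : Φ.Finite) (hΦroot : ∀ i, b i ∈ Φ)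
    (hΦrefl : ∀ β ∈ Φ, ∀ i, β - coroot i β • b i ∈ Φ) :
    ∃ B, IsCorootForm (⇑b) coroot B := by
  set G := (reflectionMonoid_finite b coroot hΦfin hΦroot hΦrefl).toFinset
  have h1 : 1 ∈ G := by
    rw [Set.Finite.mem_toFinset]
    exact one_mem _
  have hG : ∀ i, ∀ g ∈ G, g * simpleReflection (⇑b) coroot i ∈ G := by
    intro i g hg
    rw [Set.Finite.mem_toFinset] at hg ⊢
    exact mul_mem hg (Submonoid.subset_closure ⟨i, rfl⟩)
  refine ⟨averagedForm b G, fun u hu => averagedForm_self_pos b h1 hu, fun i u => ?_⟩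
  have h := averagedForm_apply_apply b (simpleReflection_mul_self (⇑b) coroot (hdiag i)) (hG i)
    u (b i)
  simp only [simpleReflection_apply, hdiag, map_sub, map_smul, LinearMap.sub_apply,
    LinearMap.smul_apply, smul_eq_mul] at h
  linarith

namespace IsCorootForm

variable {b : Basis (Fin r) ℚ V} {coroot : Fin r → Dual ℚ V} {B : LinearMap.BilinForm ℚ V}

theorem eq_zero_of_repr_mul_coroot_nonpos (hB : IsCorootForm (⇑b) coroot B) {w : V}
    (h : ∀ j, b.repr w j * coroot j w ≤ 0) : w = 0 := by
  by_contra hw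
  have hle : 2 * B w w ≤ 0 :=
    calc 2 * B w w = 2 * B w (∑ j, b.repr w j • b j) := by rw [b.sum_repr]
      _ = ∑ j, b.repr w j * (2 * B w (b j)) := by
          simp only [map_sum, map_smul, smul_eq_mul, Finset.mul_sum]
          ring_nf
      _ = ∑ j, b.repr w j * coroot j w * B (b j) (b j) := by
          simp only [hB.two_mul_apply, mul_assoc]
      _ ≤ 0 := Finset.sum_nonpos fun j _ =>
          mul_nonpos_of_nonpos_of_nonneg (h j) (hB.pos _ (b.ne_zero j)).le
  linarith [hB.pos w hw]

theorem eq_of_forall_repr_eq_or_coroot_eq (hB : IsCorootForm (⇑b) coroot B) {u w : V}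
    (h : ∀ j, b.repr u j = b.repr w j ∨ coroot j u = coroot j w) : u = w := by
  refine sub_eq_zero.1 (hB.eq_zero_of_repr_mul_coroot_nonpos fun j => ?_)
  rcases h j with h | h <;> simp [h]

theorem repr_nonneg_of_coroot_nonneg (hB : IsCorootForm (⇑b) coroot B)
    (hoff : ∀ i j : Fin r, i ≠ j → coroot j (b i) ≤ 0) {u : V}
    (h : ∀ i, b.repr u i < 0 → 0 ≤ coroot i u) (i : Fin r) : 0 ≤ b.repr u i := by
  set uPos := b.equivFun.symm fun j => (b.repr u j)⁺
  set uNeg := b.equivFun.symm fun j => (b.repr u j)⁻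
  have repr_uPos : ∀ j, b.repr uPos j = (b.repr u j)⁺ := fun j => by
    rw [← b.equivFun_apply, LinearEquiv.apply_symm_apply]
  have repr_uNeg : ∀ j, b.repr uNeg j = (b.repr u j)⁻ := fun j => by
    rw [← b.equivFun_apply, LinearEquiv.apply_symm_apply]
  have hu : uNeg = uPos - u := b.ext_elem fun j => by
    rw [map_sub, Finsupp.sub_apply, repr_uPos, repr_uNeg]
    linarith [posPart_sub_negPart (b.repr u j)]
  have huNeg : uNeg = 0 := hB.eq_zero_of_repr_mul_coroot_nonpos fun j => by
    rw [repr_uNeg]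
    rcases le_or_gt 0 (b.repr u j) with hj | hj
    · simp [negPart_eq_zero.2 hj]
    · have hPos : coroot j uPos ≤ 0 := coroot_nonpos_of_repr_nonneg b coroot hoff
        (fun k => by simp [repr_uPos]) (by simp [repr_uPos, hj.le])
      refine mul_nonpos_of_nonneg_of_nonpos (negPart_nonneg _) ?_
      rw [hu, map_sub]
      linarith [h j hj]
  have := repr_uNeg i
  rw [huNeg, map_zero, Finsupp.zero_apply, eq_comm, negPart_eq_zero] at this
  exact this

theorem mk_mem_Kostka (hB : IsCorootForm (⇑b) coroot B)
    (hoff : ∀ i j : Fin r, i ≠ j → coroot j (b i) ≤ 0) {I J : Finset (Fin r)}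
    (hcover : I ∪ J = Finset.univ) {lam μ : V} (hlam : ∀ i, 0 ≤ coroot i lam)
    (hμI : ∀ i ∈ I, coroot i μ = 0) (hμJ : ∀ j ∈ J, b.repr (lam - μ) j = 0) :
    (lam, μ) ∈ Kostka (⇑b) coroot := by
  have hIJ : ∀ k, k ∈ I ∨ k ∈ J := fun k => Finset.mem_union.1 (hcover ▸ Finset.mem_univ k)
  have hrepr : ∀ i, 0 ≤ b.repr (lam - μ) i := hB.repr_nonneg_of_coroot_nonneg hoff fun i hi =>
    (hIJ i).elim (fun hiI => by rw [map_sub, hμI i hiI, sub_zero]; exact hlam i)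
      fun hiJ => absurd (hμJ i hiJ) hi.ne
  refine (mem_Kostka_iff b coroot _).2 ⟨hlam, fun i => ?_, hrepr⟩
  rcases hIJ i with hi | hi
  · exact (hμI i hi).ge
  · have := coroot_nonpos_of_repr_nonneg b coroot hoff hrepr (hμJ i hi)
    rw [map_sub] at this
    linarith [hlam i]

theorem eq_smul_of_add_eq (hB : IsCorootForm (⇑b) coroot B) {I J : Finset (Fin r)}
    (hcover : I ∪ J = Finset.univ) {i₀ : Fin r} {lam μ : V}
    (hlam : ∀ j, coroot j lam = if i₀ = j then 1 else 0)
    (hμI : ∀ i ∈ I, coroot i μ = 0) (hμJ : ∀ j ∈ J, b.repr (lam - μ) j = 0) {p q : V × V}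
    (hp : p ∈ Kostka (⇑b) coroot) (hq : q ∈ Kostka (⇑b) coroot) (hpq : p + q = (lam, μ)) :
    p = coroot i₀ p.1 • (lam, μ) := by
  have hIJ : ∀ k, k ∈ I ∨ k ∈ J := fun k => Finset.mem_union.1 (hcover ▸ Finset.mem_univ k)
  obtain ⟨hp₁, hp₂, hp₃⟩ := (mem_Kostka_iff b coroot p).1 hp
  obtain ⟨hq₁, hq₂, hq₃⟩ := (mem_Kostka_iff b coroot q).1 hq
  have h₁ : p.1 + q.1 = lam := congrArg Prod.fst hpq
  have h₂ : p.2 + q.2 = μ := congrArg Prod.snd hpq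
  set t := coroot i₀ p.1
  have hfst : p.1 = t • lam := hB.eq_of_forall_repr_eq_or_coroot_eq fun j => Or.inr <| by
    have hj := congrArg (coroot j) h₁
    rw [map_add, hlam] at hj
    rw [map_smul, hlam, smul_eq_mul]
    split_ifs at hj ⊢ with h
    · rw [← h, mul_one]
    · linarith [hp₁ j, hq₁ j]
  have hsnd : p.2 = t • μ := hB.eq_of_forall_repr_eq_or_coroot_eq fun k => by
    rcases hIJ k with hk | hk
    · right
      have hk' := congrArg (coroot k) h₂
      rw [map_add, hμI k hk] at hk'
      rw [map_smul, hμI k hk, smul_zero]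
      linarith [hp₂ k, hq₂ k]
    · left
      have hsum : b.repr (p.1 - p.2) k + b.repr (q.1 - q.2) k = 0 := by
        rw [← hμJ k hk, ← h₁, ← h₂, ← Finsupp.add_apply, ← map_add, add_sub_add_comm]
      have hpk : b.repr (p.1 - p.2) k = 0 := by linarith [hp₃ k, hq₃ k]
      have hμk := hμJ k hk
      simp only [map_sub, map_smul, Finsupp.sub_apply, Finsupp.smul_apply, smul_eq_mul,
        hfst] at hpk hμk ⊢
      linear_combination -hpk + t * hμk
  exact Prod.ext hfst hsnd

end IsCorootForm

end

theorem stmt_8_general {V : Type*} [AddCommGroup V] [Module ℚ V] {r : ℕ}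
    (b : Module.Basis (Fin r) ℚ V) (coroot : Fin r → Module.Dual ℚ V)
    (hdiag : ∀ i, coroot i (b i) = 2)
    (hoff : ∀ i j : Fin r, i ≠ j → coroot j (b i) ≤ 0)
    (Φ : Set V) (hΦfin : Φ.Finite) (hΦroot : ∀ i, b i ∈ Φ)
    (hΦrefl : ∀ β ∈ Φ, ∀ i, β - coroot i β • b i ∈ Φ)
    (x : Fin r → Module.Dual ℚ V)
    (hx : ∀ i j : Fin r, x j (b i) = if i = j then 1 else 0)
    (ϖ : Fin r → V)
    (hϖ : ∀ i j : Fin r, coroot j (ϖ i) = if i = j then 1 else 0)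
    (i₀ : Fin r)
    (I J : Finset (Fin r)) (hcover : I ∪ J = Finset.univ)
    (v : V) (hvI : ∀ i ∈ I, coroot i v = 0) (hvJ : ∀ j ∈ J, x j (ϖ i₀ - v) = 0) :
    (ϖ i₀, v) ≠ (0 : V × V) ∧ (ϖ i₀, v) ∈ Kostka (⇑b) coroot ∧
      ∀ p q : V × V, p ∈ Kostka (⇑b) coroot → q ∈ Kostka (⇑b) coroot →
        p + q = (ϖ i₀, v) →
          (∃ c : ℚ, 0 ≤ c ∧ p = c • (ϖ i₀, v)) ∧
          (∃ c : ℚ, 0 ≤ c ∧ q = c • (ϖ i₀, v)) := by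
  obtain ⟨B, hB⟩ := exists_isCorootForm b coroot hdiag hΦfin hΦroot hΦrefl
  have hxb : ∀ j, x j = b.coord j := fun j => b.ext fun i => by
    rw [hx, Basis.coord_apply, Basis.repr_self, Finsupp.single_apply, eq_comm]
  have hvJ' : ∀ j ∈ J, b.repr (ϖ i₀ - v) j = 0 := fun j hj => by
    rw [← Basis.coord_apply, ← hxb, hvJ j hj]
  have hray : ∀ p q : V × V, p ∈ Kostka (⇑b) coroot → q ∈ Kostka (⇑b) coroot →
      p + q = (ϖ i₀, v) → ∃ c : ℚ, 0 ≤ c ∧ p = c • (ϖ i₀, v) := fun p q hp hq hpq =>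
    ⟨_, ((mem_Kostka_iff b coroot p).1 hp).1 i₀,
      hB.eq_smul_of_add_eq hcover (hϖ i₀) hvI hvJ' hp hq hpq⟩
  refine ⟨fun h => ?_, hB.mk_mem_Kostka hoff hcover (fun i => ?_) hvI hvJ',
    fun p q hp hq hpq => ⟨hray p q hp hq hpq, hray q p hq hp ((add_comm q p).trans hpq)⟩⟩
  · have h₀ := hϖ i₀ i₀
    rw [show ϖ i₀ = 0 from congrArg Prod.fst h, map_zero] at h₀
    simp at h₀
  · rw [hϖ]
    split_ifs <;> norm_num

/-- For every index `i₀` and every pair of disjoint subsets `I, J` with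
`I ∪ J = {1, …, r}`, the pair `(ϖ_{i₀}, v_{I,J}(ϖ_{i₀}))` spans an extremal ray of the
Kostka cone `𝒦`: it is nonzero, lies in `𝒦`, and whenever it is written as a sum of two
elements of `𝒦`, each summand is a nonnegative rational multiple of it. -/
theorem stmt_8 {V : Type*} [AddCommGroup V] [Module ℚ V] {r : ℕ}
    (b : Module.Basis (Fin r) ℚ V) (coroot : Fin r → Module.Dual ℚ V)
    (hdiag : ∀ i, coroot i (b i) = 2)
    (hoff : ∀ i j : Fin r, i ≠ j → coroot j (b i) ≤ 0)
    (hint : ∀ i j : Fin r, ∃ n : ℤ, coroot j (b i) = (n : ℚ))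
    (Φ : Set V) (hΦfin : Φ.Finite) (hΦroot : ∀ i, b i ∈ Φ)
    (hΦrefl : ∀ β ∈ Φ, ∀ i, β - coroot i β • b i ∈ Φ)
    (x : Fin r → Module.Dual ℚ V)
    (hx : ∀ i j : Fin r, x j (b i) = if i = j then 1 else 0)
    (ϖ : Fin r → V)
    (hϖ : ∀ i j : Fin r, coroot j (ϖ i) = if i = j then 1 else 0)
    (i₀ : Fin r)
    (I J : Finset (Fin r)) (hdisj : Disjoint I J) (hcover : I ∪ J = Finset.univ)
    (v : V) (hvI : ∀ i ∈ I, coroot i v = 0) (hvJ : ∀ j ∈ J, x j (ϖ i₀ - v) = 0) :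
    (ϖ i₀, v) ≠ (0 : V × V) ∧ (ϖ i₀, v) ∈ Kostka (⇑b) coroot ∧
      ∀ p q : V × V, p ∈ Kostka (⇑b) coroot → q ∈ Kostka (⇑b) coroot →
        p + q = (ϖ i₀, v) →
          (∃ c : ℚ, 0 ≤ c ∧ p = c • (ϖ i₀, v)) ∧
          (∃ c : ℚ, 0 ≤ c ∧ q = c • (ϖ i₀, v)) :=
  stmt_8_general b coroot hdiag hoff Φ hΦfin hΦroot hΦrefl x hx ϖ hϖ i₀ I J hcover v hvI hvJ
end

section
/- If a nonzero pair (λ, μ) ∈ 𝒦 spans an extremal ray of the Kostka cone 𝒦, then there exist an index i, a positive rational c, and disjoint subsets I, J with I ∪ J = {1, …, r}, such that λ = c·ϖ_i and μ = c·v_{I,J}(ϖ_i). -/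
open Set Finset Submodule Filter Topology

theorem LinearMap.finite_setOf_mapsTo {R M : Type*} [Semiring R] [AddCommMonoid M] [Module R M]
    {Φ : Set M} (hΦ : Φ.Finite) (hspan : span R Φ = ⊤) :
    {f : M →ₗ[R] M | MapsTo f Φ Φ}.Finite := by
  have : Finite Φ := hΦ.to_subtype
  refine Set.finite_coe_iff.mp <| Finite.of_injective
    (fun f : {f : M →ₗ[R] M | MapsTo f Φ Φ} => f.2.restrict) fun f g hfg => ?_
  exact Subtype.ext <| LinearMap.ext_on hspan fun v hv =>
    congrArg Subtype.val (congrFun hfg ⟨v, hv⟩)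

section InvariantForm

variable {𝕜 V ι : Type*} [Field 𝕜] [LinearOrder 𝕜] [IsStrictOrderedRing 𝕜]
  [AddCommGroup V] [Module 𝕜 V] [Fintype ι]

theorem Module.Basis.exists_posDef_invariant_of_mapsTo (b : Module.Basis ι 𝕜 V) {Φ : Set V}
    (hΦ : Φ.Finite) (hspan : span 𝕜 Φ = ⊤) :
    ∃ B : LinearMap.BilinForm 𝕜 V, (∀ v ≠ 0, 0 < B v v) ∧
      ∀ e : V ≃ₗ[𝕜] V, MapsTo e Φ Φ → ∀ v w, B (e v) (e w) = B v w := by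
  classical
  set M := (LinearMap.finite_setOf_mapsTo hΦ hspan).toFinset
  have hM : ∀ f, f ∈ M ↔ MapsTo f Φ Φ := fun f => by simp [M]
  -- average the coordinate dot product `D` over `M`; precomposing with `e` permutes `M`
  let D : LinearMap.BilinForm 𝕜 V := ∑ i, (b.coord i).smulRight (b.coord i)
  have hD : ∀ v w, D v w = ∑ i, b.repr v i * b.repr w i := fun v w => by simp [D]
  refine ⟨∑ f ∈ M, D.compl₁₂ f f, fun v hv => ?_, fun e he v w => ?_⟩
  · have hDpos : 0 < D v v := by
      obtain ⟨i, hi⟩ : ∃ i, b.repr v i ≠ 0 := by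
        by_contra! h
        exact hv (b.repr.map_eq_zero_iff.mp (Finsupp.ext h))
      rw [hD]
      exact Finset.sum_pos' (fun j _ => mul_self_nonneg _) ⟨i, mem_univ i, mul_self_pos.mpr hi⟩
    calc 0 < D (LinearMap.id v) (LinearMap.id v) := hDpos
      _ ≤ ∑ f ∈ M, D (f v) (f v) :=
        Finset.single_le_sum (f := fun f : V →ₗ[𝕜] V => D (f v) (f v))
          (fun f _ => by rw [hD]; exact Finset.sum_nonneg fun i _ => mul_self_nonneg _)
          ((hM LinearMap.id).2 (mapsTo_id Φ))
      _ = _ := by simp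
  · have he' : MapsTo e.symm Φ Φ := fun y hy => by
      obtain ⟨x, hx, rfl⟩ := ((hΦ.injOn_iff_bijOn_of_mapsTo he).mp e.injective.injOn).surjOn hy
      simpa using hx
    simp only [LinearMap.sum_apply, LinearMap.compl₁₂_apply]
    refine Finset.sum_nbij' (fun f => f ∘ₗ e.toLinearMap) (fun f => f ∘ₗ e.symm.toLinearMap)
      (fun f hf => (hM _).2 (((hM f).1 hf).comp he))
      (fun f hf => (hM _).2 (((hM f).1 hf).comp he')) (fun f _ => ?_) (fun f _ => ?_)
      fun f _ => rfl
    · ext v; simp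
    · ext v; simp

theorem Module.Basis.eq_zero_of_forall_repr_mul_coroot_nonpos (b : Module.Basis ι 𝕜 V)
    (coroot : ι → Module.Dual 𝕜 V) (hdiag : ∀ i, coroot i (b i) = 2) {Φ : Set V}
    (hΦ : Φ.Finite) (hΦroot : ∀ i, b i ∈ Φ) (hΦrefl : ∀ β ∈ Φ, ∀ i, β - coroot i β • b i ∈ Φ)
    {v : V} (hv : ∀ i, b.repr v i * coroot i v ≤ 0) : v = 0 := by
  have hspan : span 𝕜 Φ = ⊤ := eq_top_mono (span_mono (range_subset_iff.2 hΦroot)) b.span_eq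
  obtain ⟨B, hpos, hinv⟩ := b.exists_posDef_invariant_of_mapsTo hΦ hspan
  have hcoroot : ∀ i w, 2 * B w (b i) = coroot i w * B (b i) (b i) := fun i w => by
    have := hinv (Module.reflection (hdiag i))
      (fun β hβ => by simpa [Module.reflection_apply] using hΦrefl β hβ i) w (b i)
    rw [Module.reflection_apply_self, Module.reflection_apply] at this
    simp only [map_sub, map_smul, map_neg, LinearMap.sub_apply, LinearMap.smul_apply,
      smul_eq_mul] at this
    linear_combination -this
  by_contra hv0
  have hexp : B v v = ∑ i, b.repr v i * B v (b i) := by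
    conv_lhs => arg 2; rw [← b.sum_repr v]
    simp only [map_sum, map_smul, smul_eq_mul]
  have hvv : 2 * B v v = ∑ i, b.repr v i * coroot i v * B (b i) (b i) := by
    simp only [hexp, Finset.mul_sum, mul_assoc, ← hcoroot]
    ring_nf
  have hle : ∑ i, b.repr v i * coroot i v * B (b i) (b i) ≤ 0 :=
    Finset.sum_nonpos fun i _ => mul_nonpos_of_nonpos_of_nonneg (hv i)
      (hpos _ (b.ne_zero i)).le
  linarith [hpos v hv0]

end InvariantForm

theorem Submodule.finrank_le_card_add_finrank_of_forall_eq_zero {K V ι : Type*} [Field K]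
    [AddCommGroup V] [Module K V] [FiniteDimensional K V] (W U : Submodule K V) (s : Finset ι)
    (f : ι → Module.Dual K V) (h : ∀ v ∈ W, (∀ j ∈ s, f j v = 0) → v ∈ U) :
    Module.finrank K W ≤ #s + Module.finrank K U := by
  let g : W →ₗ[K] (s → K) := LinearMap.pi fun j => f j ∘ₗ W.subtype
  have hrange : Module.finrank K (LinearMap.range g) ≤ #s := by
    simpa using Submodule.finrank_le (LinearMap.range g)
  have hker : Module.finrank K (LinearMap.ker g) ≤ Module.finrank K U := by
    rw [← Submodule.finrank_map_subtype_eq]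
    refine Submodule.finrank_mono ?_
    rintro _ ⟨v, hv, rfl⟩
    exact h v v.2 fun j hj => congrFun (LinearMap.mem_ker.mp hv) ⟨j, hj⟩
  have := LinearMap.finrank_range_add_finrank_ker g
  omega

theorem eventually_nonneg_add_mul {𝕜 : Type*} [Field 𝕜] [LinearOrder 𝕜] [IsStrictOrderedRing 𝕜]
    [TopologicalSpace 𝕜] [OrderTopology 𝕜] {t s : 𝕜} (ht : 0 ≤ t) (hs : t = 0 → s = 0) :
    ∀ᶠ ε in 𝓝 0, 0 ≤ t + ε * s := by
  rcases ht.eq_or_lt with rfl | ht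
  · simp [hs rfl]
  · have : Tendsto (fun ε => t + ε * s) (𝓝 0) (𝓝 t) :=
      (continuous_const.add (continuous_id.mul continuous_const)).tendsto' 0 t (by simp)
    exact (this.eventually (eventually_gt_nhds ht)).mono fun _ => le_of_lt

section Coordinates

variable {R V ι : Type*} [CommSemiring R] [AddCommMonoid V] [Module R V]

theorem Module.Basis.apply_eq_sum_repr_mul [Fintype ι] (b : Module.Basis ι R V)
    (f : Module.Dual R V) (z : V) : f z = ∑ i, b.repr z i * f (b i) := by
  conv_lhs => rw [← b.sum_repr z]
  simp only [map_sum, map_smul, smul_eq_mul]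

variable (coroot : ι → Module.Dual R V)

theorem coroot_sum_smul_fundamental [DecidableEq ι] (ϖ : ι → V)
    (hϖ : ∀ i j, coroot j (ϖ i) = if i = j then 1 else 0) (s : Finset ι) (c : ι → R) (j : ι) :
    coroot j (∑ p ∈ s, c p • ϖ p) = if j ∈ s then c j else 0 := by
  simp [map_sum, hϖ]

theorem coroot_fundamental_eq_zero_of_coroot_eq_zero [DecidableEq ι] (ϖ : ι → V)
    (hϖ : ∀ i j, coroot j (ϖ i) = if i = j then 1 else 0) {v : V} {k j : ι}
    (hk : coroot k v ≠ 0) (hj : coroot j v = 0) : coroot j (ϖ k) = 0 := by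
  rw [hϖ, if_neg]
  rintro rfl
  exact hk hj

end Coordinates

section CartanMatrix

variable {𝕜 V ι : Type*} [Field 𝕜] [LinearOrder 𝕜] [IsStrictOrderedRing 𝕜]
  [AddCommGroup V] [Module 𝕜 V] (b : Module.Basis ι 𝕜 V) (coroot : ι → Module.Dual 𝕜 V)

theorem repr_mul_coroot_basis_nonpos (hoff : ∀ i j, i ≠ j → coroot j (b i) ≤ 0) {z : V}
    (hz : ∀ i, 0 ≤ b.repr z i) {j : ι} (hj : b.repr z j = 0) (i : ι) :
    b.repr z i * coroot j (b i) ≤ 0 := by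
  rcases eq_or_ne i j with rfl | hij
  · simp [hj]
  · exact mul_nonpos_of_nonneg_of_nonpos (hz i) (hoff i j hij)

theorem coroot_nonpos_of_repr_eq_zero [Fintype ι] (hoff : ∀ i j, i ≠ j → coroot j (b i) ≤ 0)
    {z : V} (hz : ∀ i, 0 ≤ b.repr z i) {j : ι} (hj : b.repr z j = 0) : coroot j z ≤ 0 := by
  rw [b.apply_eq_sum_repr_mul]
  exact Finset.sum_nonpos fun i _ => repr_mul_coroot_basis_nonpos b coroot hoff hz hj i

theorem coroot_basis_eq_zero_of_repr_ne_zero [Fintype ι]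
    (hoff : ∀ i j, i ≠ j → coroot j (b i) ≤ 0) {z : V} (hz : ∀ i, 0 ≤ b.repr z i) {j : ι}
    (hj : b.repr z j = 0) (hzj : coroot j z = 0) {s : ι} (hs : b.repr z s ≠ 0) :
    coroot j (b s) = 0 := by
  rw [b.apply_eq_sum_repr_mul, Finset.sum_eq_zero_iff_of_nonpos
    fun i _ => repr_mul_coroot_basis_nonpos b coroot hoff hz hj i] at hzj
  exact (mul_eq_zero.mp (hzj s (mem_univ s))).resolve_left hs

end CartanMatrix

def IsExtremeRay {E : Type*} [AddCommGroup E] [Module ℚ E] (K : Set E) (z : E) : Prop :=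
  ∀ p ∈ K, ∀ q ∈ K, p + q = z → ∃ c : ℚ, p = c • z

namespace Kostka

variable {V : Type*} [AddCommGroup V] [Module ℚ V] {r : ℕ} {b : Module.Basis (Fin r) ℚ V}
  {coroot : Fin r → Module.Dual ℚ V} {lam mu : V}

theorem mem_iff {p : V × V} :
    p ∈ Kostka b coroot ↔ (∀ i, 0 ≤ coroot i p.1) ∧ (∀ i, 0 ≤ coroot i p.2) ∧
      ∀ i, 0 ≤ b.repr (p.1 - p.2) i := by
  refine and_congr_right' (and_congr_right' ⟨?_, fun h => ⟨_, h, (b.sum_repr _).symm⟩⟩)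
  rintro ⟨c, hc, heq⟩
  rwa [heq, b.repr_sum_self]

theorem smul_mem {p : V × V} (hp : p ∈ Kostka b coroot) {c : ℚ} (hc : 0 ≤ c) :
    c • p ∈ Kostka b coroot := by
  obtain ⟨h1, h2, h3⟩ := mem_iff.mp hp
  refine mem_iff.mpr ⟨fun i => ?_, fun i => ?_, fun i => ?_⟩
  · simpa using mul_nonneg hc (h1 i)
  · simpa using mul_nonneg hc (h2 i)
  · simpa [← smul_sub] using mul_nonneg hc (h3 i)

theorem eventually_add_smul_mem (hK : (lam, mu) ∈ Kostka b coroot) {u w : V}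
    (hu : ∀ j, coroot j lam = 0 → coroot j u = 0) (hw : ∀ j, coroot j mu = 0 → coroot j w = 0)
    (huw : ∀ j, b.repr (lam - mu) j = 0 → b.repr (u - w) j = 0) :
    ∀ᶠ ε in 𝓝 (0 : ℚ), (lam, mu) + ε • (u, w) ∈ Kostka b coroot := by
  obtain ⟨h1, h2, h3⟩ := mem_iff.mp hK
  have hsub : ∀ ε : ℚ, lam + ε • u - (mu + ε • w) = lam - mu + ε • (u - w) := fun ε => by
    module
  simp only [mem_iff, Prod.fst_add, Prod.snd_add, Prod.smul_fst, Prod.smul_snd, hsub, map_add,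
    map_smul, Finsupp.add_apply, Finsupp.smul_apply, smul_eq_mul, eventually_and,
    eventually_all]
  exact ⟨fun j => eventually_nonneg_add_mul (h1 j) (hu j),
    fun j => eventually_nonneg_add_mul (h2 j) (hw j),
    fun j => eventually_nonneg_add_mul (h3 j) (huw j)⟩

theorem exists_eq_smul_of_isExtremeRay (hK : (lam, mu) ∈ Kostka b coroot)
    (hext : IsExtremeRay (Kostka b coroot) (lam, mu)) {u w : V}
    (hu : ∀ j, coroot j lam = 0 → coroot j u = 0) (hw : ∀ j, coroot j mu = 0 → coroot j w = 0)
    (huw : ∀ j, b.repr (lam - mu) j = 0 → b.repr (u - w) j = 0) :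
    ∃ s : ℚ, u = s • lam ∧ w = s • mu := by
  have hnear := eventually_add_smul_mem hK hu hw huw
  have hnear' : ∀ᶠ ε in 𝓝 (0 : ℚ), (lam, mu) + (-ε) • (u, w) ∈ Kostka b coroot :=
    (continuous_neg.tendsto' 0 0 neg_zero).eventually hnear
  obtain ⟨ε, ⟨hp, hq⟩, hε : ε ≠ 0⟩ :=
    ((hnear.and hnear').filter_mono nhdsWithin_le_nhds |>.and
      (self_mem_nhdsWithin (s := {0}ᶜ))).exists
  -- the halves of `(lam, mu) ± ε • (u, w)` lie in the cone and add up to `(lam, mu)`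
  obtain ⟨c, hc⟩ := hext _ (smul_mem hp (by norm_num : (0 : ℚ) ≤ 2⁻¹)) _
    (smul_mem hq (by norm_num : (0 : ℚ) ≤ 2⁻¹)) (by module)
  have huw : (u, w) = ((2 * c - 1) / ε) • (lam, mu) := by
    linear_combination (norm := (match_scalars <;> field_simp <;> ring)) (2 / ε) • hc
  exact ⟨(2 * c - 1) / ε, congrArg Prod.fst huw, congrArg Prod.snd huw⟩

theorem coroot_snd_eq_zero_of_coroot_fst_ne_zero (hK : (lam, mu) ∈ Kostka b coroot)
    (hext : IsExtremeRay (Kostka b coroot) (lam, mu)) {ϖ : Fin r → V}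
    (hϖ : ∀ i j, coroot j (ϖ i) = if i = j then 1 else 0) (hlm : lam ≠ mu) {k : Fin r}
    (hk : coroot k lam ≠ 0) : coroot k mu = 0 := by
  by_contra hk'
  obtain ⟨s, hlam, hmu⟩ := exists_eq_smul_of_isExtremeRay hK hext
    (fun j => coroot_fundamental_eq_zero_of_coroot_eq_zero coroot ϖ hϖ hk)
    (fun j => coroot_fundamental_eq_zero_of_coroot_eq_zero coroot ϖ hϖ hk') (fun j _ => by simp)
  have hs : s ≠ 0 := by
    rintro rfl
    simpa [hϖ] using congrArg (coroot k) hlam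
  exact hlm (smul_right_injective V hs (hlam.symm.trans hmu))

theorem repr_sub_ne_zero_of_coroot_fst_ne_zero (hK : (lam, mu) ∈ Kostka b coroot)
    (hext : IsExtremeRay (Kostka b coroot) (lam, mu)) (hoff : ∀ i j, i ≠ j → coroot j (b i) ≤ 0)
    {ϖ : Fin r → V} (hϖ : ∀ i j, coroot j (ϖ i) = if i = j then 1 else 0) (hlm : lam ≠ mu)
    {k : Fin r} (hk : coroot k lam ≠ 0) : b.repr (lam - mu) k ≠ 0 := by
  intro h0
  have := coroot_nonpos_of_repr_eq_zero b coroot hoff (mem_iff.mp hK).2.2 h0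
  rw [map_sub, coroot_snd_eq_zero_of_coroot_fst_ne_zero hK hext hϖ hlm hk, sub_zero] at this
  exact hk (this.antisymm ((mem_iff.mp hK).1 k))

theorem exists_eq_smul_sub_of_isExtremeRay (hK : (lam, mu) ∈ Kostka b coroot)
    (hext : IsExtremeRay (Kostka b coroot) (lam, mu)) {ϖ : Fin r → V}
    (hϖ : ∀ i j, coroot j (ϖ i) = if i = j then 1 else 0) {v : V}
    (hv : ∀ j, coroot j lam = 0 → coroot j mu = 0 → coroot j v = 0)
    (hvS : ∀ j, b.repr (lam - mu) j = 0 → b.repr v j = 0) : ∃ s : ℚ, v = s • (lam - mu) := by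
  classical
  set P := ({j | coroot j lam ≠ 0} : Finset (Fin r))
  -- `u` lives on the coroot support of `lam` and agrees with `v` there
  set u := ∑ p ∈ P, coroot p v • ϖ p
  have hu : ∀ j, coroot j u = if coroot j lam ≠ 0 then coroot j v else 0 := fun j => by
    simp [u, P, coroot_sum_smul_fundamental coroot ϖ hϖ]
  obtain ⟨s, hs1, hs2⟩ := exists_eq_smul_of_isExtremeRay hK hext (u := u) (w := u - v)
    (fun j hj => by simp [hu, hj])
    (fun j hj => by by_cases hj' : coroot j lam = 0 <;> simp [hu, hj', hv j _ hj])
    (fun j hj => by simpa using hvS j hj)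
  exact ⟨s, by rw [smul_sub, ← hs1, ← hs2, sub_sub_cancel]⟩

theorem card_filter_repr_ne_zero_le_one (hK : (lam, mu) ∈ Kostka b coroot)
    (hext : IsExtremeRay (Kostka b coroot) (lam, mu)) (hoff : ∀ i j, i ≠ j → coroot j (b i) ≤ 0)
    {ϖ : Fin r → V} (hϖ : ∀ i j, coroot j (ϖ i) = if i = j then 1 else 0) :
    #{j | b.repr (lam - mu) j ≠ 0 ∧ ¬(coroot j lam = 0 ∧ coroot j mu = 0)} ≤ 1 := by
  classical
  have : FiniteDimensional ℚ V := Module.Finite.of_basis b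
  set S := ({j | b.repr (lam - mu) j ≠ 0} : Finset (Fin r))
  set W := span ℚ (range fun s : S => b s)
  have hW : ∀ f : Module.Dual ℚ V, (∀ s ∈ S, f (b s) = 0) → ∀ v ∈ W, f v = 0 :=
    fun f hf v hv => (span_le (p := LinearMap.ker f)).2 (by rintro _ ⟨s, rfl⟩; exact hf s s.2) hv
  have hline : Module.finrank ℚ (ℚ ∙ (lam - mu)) ≤ 1 := by
    simpa using finrank_span_le_card (R := ℚ) ({lam - mu} : Set V)
  have hdim : Module.finrank ℚ W ≤ #(S.filter fun j => coroot j lam = 0 ∧ coroot j mu = 0) +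
      Module.finrank ℚ (ℚ ∙ (lam - mu)) := by
    refine finrank_le_card_add_finrank_of_forall_eq_zero W _ _ coroot fun v hv hZ => ?_
    obtain ⟨s, hs⟩ := exists_eq_smul_sub_of_isExtremeRay hK hext hϖ (v := v)
      (fun j hj1 hj2 => by
        by_cases hjS : b.repr (lam - mu) j = 0
        -- `coroot j (lam - mu) = 0` is a sum of nonpositive terms, one for each `s ∈ S`
        · refine hW _ (fun s hs => ?_) v hv
          exact coroot_basis_eq_zero_of_repr_ne_zero b coroot hoff (mem_iff.mp hK).2.2 hjS
            (by simp [hj1, hj2]) (by simpa [S] using hs)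
        · exact hZ j (mem_filter.2 ⟨mem_filter.2 ⟨mem_univ j, hjS⟩, hj1, hj2⟩))
      (fun j hj => hW (b.coord j) (fun s hs => by
        simp only [S, mem_filter] at hs
        simpa [Finsupp.single_apply] using ne_of_apply_ne _ (hs.2.trans_eq hj.symm)) v hv)
    exact mem_span_singleton.2 ⟨s, hs.symm⟩
  have hWdim : Module.finrank ℚ W = #S :=
    (finrank_span_eq_card (b.linearIndependent.comp _ Subtype.val_injective)).trans
      (Fintype.card_coe S)
  have := card_filter_add_card_filter_not (s := S) (fun j => coroot j lam = 0 ∧ coroot j mu = 0)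
  simp only [S, filter_filter] at this hWdim hdim
  omega

theorem fst_ne_zero (hK : (lam, mu) ∈ Kostka b coroot) (hne : (lam, mu) ≠ 0)
    (hpd : ∀ v, (∀ i, b.repr v i * coroot i v ≤ 0) → v = 0) : lam ≠ 0 := by
  rintro rfl
  obtain ⟨-, hmu, hsub⟩ := mem_iff.mp hK
  have : 0 - mu = 0 :=
    hpd _ fun i => mul_nonpos_of_nonneg_of_nonpos (hsub i) (by simpa using hmu i)
  exact hne (by simpa using this)

theorem exists_fst_eq_smul_fundamental (hK : (lam, mu) ∈ Kostka b coroot)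
    (hext : IsExtremeRay (Kostka b coroot) (lam, mu)) (hoff : ∀ i j, i ≠ j → coroot j (b i) ≤ 0)
    {ϖ : Fin r → V} (hϖ : ∀ i j, coroot j (ϖ i) = if i = j then 1 else 0)
    (hpd : ∀ v, (∀ i, b.repr v i * coroot i v ≤ 0) → v = 0) (hne : (lam, mu) ≠ 0) :
    ∃ (p : Fin r) (a : ℚ), 0 < a ∧ lam = a • ϖ p ∧
      ∀ j, coroot j mu ≠ 0 → b.repr (lam - mu) j = 0 := by
  have hnd : ∀ v : V, (∀ i, coroot i v = 0) → v = 0 := fun v hv => hpd v fun i => by simp [hv]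
  obtain ⟨p, hp⟩ : ∃ p, coroot p lam ≠ 0 := by
    by_contra! h
    exact fst_ne_zero hK hne hpd (hnd lam h)
  refine ⟨p, coroot p lam, ((mem_iff.mp hK).1 p).lt_of_ne' hp, ?_⟩
  by_cases hlm : lam = mu
  · subst hlm
    refine ⟨?_, fun j _ => by simp⟩
    have hϖp := fun j => coroot_fundamental_eq_zero_of_coroot_eq_zero coroot ϖ hϖ hp (j := j)
    obtain ⟨s, hs, -⟩ := exists_eq_smul_of_isExtremeRay hK hext hϖp hϖp (by simp)
    have : s * coroot p lam = 1 := by simpa [hϖ] using (congrArg (coroot p) hs).symm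
    rw [hs, smul_smul, mul_comm, this, one_smul]
  · have hT : ∀ j, b.repr (lam - mu) j ≠ 0 → ¬(coroot j lam = 0 ∧ coroot j mu = 0) → j = p :=
      fun j hj hj' => card_le_one.mp (card_filter_repr_ne_zero_le_one hK hext hoff hϖ) j
        (mem_filter.2 ⟨mem_univ j, hj, hj'⟩) p (mem_filter.2 ⟨mem_univ p,
          repr_sub_ne_zero_of_coroot_fst_ne_zero hK hext hoff hϖ hlm hp, fun h => hp h.1⟩)
    refine ⟨sub_eq_zero.mp (hnd _ fun i => ?_), fun j hj => ?_⟩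
    · rcases eq_or_ne p i with rfl | hi
      · simp [hϖ]
      · have : coroot i lam = 0 := by
          by_contra h
          exact hi (hT i (repr_sub_ne_zero_of_coroot_fst_ne_zero hK hext hoff hϖ hlm h)
            fun h' => h h'.1).symm
        simp [hϖ, hi, this]
    · by_contra hj'
      obtain rfl := hT j hj' fun h => hj h.2
      exact hj (coroot_snd_eq_zero_of_coroot_fst_ne_zero hK hext hϖ hlm hp)

end Kostka

theorem stmt_9_general {V : Type*} [AddCommGroup V] [Module ℚ V] {r : ℕ}
    (b : Module.Basis (Fin r) ℚ V) (coroot : Fin r → Module.Dual ℚ V)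
    (hdiag : ∀ i, coroot i (b i) = 2)
    (hoff : ∀ i j : Fin r, i ≠ j → coroot j (b i) ≤ 0)
    (Φ : Set V) (hΦfin : Φ.Finite) (hΦroot : ∀ i, b i ∈ Φ)
    (hΦrefl : ∀ β ∈ Φ, ∀ i, β - coroot i β • b i ∈ Φ)
    (x : Fin r → Module.Dual ℚ V)
    (hx : ∀ i j : Fin r, x j (b i) = if i = j then 1 else 0)
    (ϖ : Fin r → V)
    (hϖ : ∀ i j : Fin r, coroot j (ϖ i) = if i = j then 1 else 0)
    (lam mu : V)
    (hK : (lam, mu) ∈ Kostka (⇑b) coroot)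
    (hne : (lam, mu) ≠ (0 : V × V))
    (hext : ∀ p q : V × V, p ∈ Kostka (⇑b) coroot → q ∈ Kostka (⇑b) coroot →
      p + q = (lam, mu) →
        (∃ c : ℚ, 0 ≤ c ∧ p = c • (lam, mu)) ∧
        (∃ c : ℚ, 0 ≤ c ∧ q = c • (lam, mu))) :
    ∃ (i : Fin r) (c : ℚ), 0 < c ∧
      ∃ I J : Finset (Fin r), Disjoint I J ∧ I ∪ J = Finset.univ ∧
        ∃ v : V, (∀ k ∈ I, coroot k v = 0) ∧ (∀ j ∈ J, x j (ϖ i - v) = 0) ∧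
          lam = c • ϖ i ∧ mu = c • v := by
  obtain rfl : x = fun j => b.coord j :=
    funext fun j => b.ext fun i => by simp [hx, Finsupp.single_apply]
  obtain ⟨p, a, ha, hlam, hslack⟩ := Kostka.exists_fst_eq_smul_fundamental hK
    (fun p hp q hq hpq => (hext p q hp hq hpq).1.imp fun _ hc => hc.2) hoff hϖ
    (fun _ => b.eq_zero_of_forall_repr_mul_coroot_nonpos coroot hdiag hΦfin hΦroot hΦrefl) hne
  refine ⟨p, a, ha, univ.filter fun k => coroot k mu = 0, univ.filter fun k => ¬coroot k mu = 0,
    disjoint_filter_filter_not _ _ _, filter_union_filter_not_eq _ _, a⁻¹ • mu,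
    fun k hk => by simp [(mem_filter.1 hk).2], fun j hj => ?_, hlam,
    by rw [smul_inv_smul₀ ha.ne']⟩
  have : ϖ p - a⁻¹ • mu = a⁻¹ • (lam - mu) := by rw [hlam, smul_sub, inv_smul_smul₀ ha.ne']
  simp only [this, map_smul, Module.Basis.coord_apply, hslack j (mem_filter.1 hj).2, smul_zero]

/-- If a nonzero pair `(lam, mu) ∈ 𝒦` spans an extremal ray of the Kostka
cone `𝒦`, then there exist an index `i`, a positive rational `c`, and disjoint subsets
`I, J` with `I ∪ J = {1, …, r}`, such that `lam = c•ϖ_i` and `mu = c•v_{I,J}(ϖ_i)`. -/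
theorem stmt_9 {V : Type*} [AddCommGroup V] [Module ℚ V] {r : ℕ}
    (b : Module.Basis (Fin r) ℚ V) (coroot : Fin r → Module.Dual ℚ V)
    (hdiag : ∀ i, coroot i (b i) = 2)
    (hoff : ∀ i j : Fin r, i ≠ j → coroot j (b i) ≤ 0)
    (hint : ∀ i j : Fin r, ∃ n : ℤ, coroot j (b i) = (n : ℚ))
    (Φ : Set V) (hΦfin : Φ.Finite) (hΦroot : ∀ i, b i ∈ Φ)
    (hΦrefl : ∀ β ∈ Φ, ∀ i, β - coroot i β • b i ∈ Φ)
    (x : Fin r → Module.Dual ℚ V)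
    (hx : ∀ i j : Fin r, x j (b i) = if i = j then 1 else 0)
    (ϖ : Fin r → V)
    (hϖ : ∀ i j : Fin r, coroot j (ϖ i) = if i = j then 1 else 0)
    (lam mu : V)
    (hK : (lam, mu) ∈ Kostka (⇑b) coroot)
    (hne : (lam, mu) ≠ (0 : V × V))
    (hext : ∀ p q : V × V, p ∈ Kostka (⇑b) coroot → q ∈ Kostka (⇑b) coroot →
      p + q = (lam, mu) →
        (∃ c : ℚ, 0 ≤ c ∧ p = c • (lam, mu)) ∧
        (∃ c : ℚ, 0 ≤ c ∧ q = c • (lam, mu))) :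
    ∃ (i : Fin r) (c : ℚ), 0 < c ∧
      ∃ I J : Finset (Fin r), Disjoint I J ∧ I ∪ J = Finset.univ ∧
        ∃ v : V, (∀ k ∈ I, coroot k v = 0) ∧ (∀ j ∈ J, x j (ϖ i - v) = 0) ∧
          lam = c • ϖ i ∧ mu = c • v :=
  stmt_9_general b coroot hdiag hoff Φ hΦfin hΦroot hΦrefl x hx ϖ hϖ lam mu hK hne hext
end

section
/- Suppose I ⊆ {1, …, r} decomposes as a disjoint union I = I_1 ⊔ I_2 with ⟨α_a, α_b^∨⟩ = 0 for all a ∈ I_1 and b ∈ I_2, and suppose i ∈ I_1. Then v_{I,I^c}(ϖ_i) = v_{I_1,I_1^c}(ϖ_i), where for a subset S, S^c denotes its complement in {1, …, r}. -/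
/-!
`v - v₁` lies in the span of the simple roots of `I` and is killed by the coroots of `I`: for
`k ∈ I₁` directly, and for `k ∈ I₂` because `ϖ_i - v₁` is a combination of roots of `I₁`, which are
orthogonal to the coroots of `I₂`, while `i ∉ I₂`. Such a vector is zero: the reflections `s_k`,
`k ∈ I`, lie in the finite group of automorphisms preserving `Φ` and fixing it, and summing over
that group multiplies it by the order of the group but kills each `α_k = -s_k α_k`.
-/
open Pointwise Submodule

section Averaging

variable {K V : Type*} [Semiring K] [AddCommGroup V] [Module K V]

theorem finite_stabilizer_of_span_eq_top_s12 {Φ : Set V} (hΦ : Φ.Finite) (hspan : span K Φ = ⊤) :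
    Finite (MulAction.stabilizer (V ≃ₗ[K] V) Φ) := by
  have := hΦ.to_subtype
  have hmaps {g : V ≃ₗ[K] V} (hg : g • Φ = Φ) {p : V} (hp : p ∈ Φ) : g p ∈ Φ :=
    hg ▸ Set.smul_mem_smul_set hp
  refine Finite.of_injective (fun g (p : Φ) => (⟨g.1 p, hmaps g.2 p.2⟩ : Φ)) fun g h hgh => ?_
  refine Subtype.ext <| LinearEquiv.toLinearMap_injective <| LinearMap.ext_on hspan fun p hp => ?_
  simpa using congr_arg Subtype.val (congr_fun hgh ⟨p, hp⟩)

theorem eq_zero_of_forall_fixed_of_mem_span_negated [IsAddTorsionFree V]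
    {G : Subgroup (V ≃ₗ[K] V)} [Finite G] {w : V} (hfix : ∀ g ∈ G, g w = w)
    (hw : w ∈ span K {u | ∃ g ∈ G, g u = -u}) : w = 0 := by
  have := Fintype.ofFinite G
  let A : V →ₗ[K] V := ∑ g : G, (g : V ≃ₗ[K] V).toLinearMap
  have hA_apply (u : V) : A u = ∑ g : G, (g : V ≃ₗ[K] V) u := by simp [A]
  have hA_comp (h : G) (u : V) : A ((h : V ≃ₗ[K] V) u) = A u := by
    rw [hA_apply, hA_apply, ← Equiv.sum_comp (Equiv.mulRight h) (fun g : G => (g : V ≃ₗ[K] V) u)]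
    rfl
  have hker : span K {u | ∃ g ∈ G, g u = -u} ≤ LinearMap.ker A := by
    refine span_le.mpr fun u ⟨g, hg, hgu⟩ => ?_
    have h := hA_comp ⟨g, hg⟩ u
    rw [Subgroup.coe_mk, hgu, map_neg, eq_comm, self_eq_neg] at h
    exact h
  have hAw : A w = Fintype.card G • w := by
    simp [hA_apply, hfix _ (SetLike.coe_mem _)]
  have hcard : Fintype.card G • w = 0 := hAw ▸ hker hw
  exact (nsmul_eq_zero_iff.mp hcard).resolve_right Fintype.card_ne_zero

end Averaging

section RootSystem

variable {ι K V : Type*} [CommRing K] [AddCommGroup V] [Module K V]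
  {α : ι → V} {coroot : ι → Module.Dual K V} {Φ : Set V}

theorem reflection_smul_eq_self (hdiag : ∀ k, coroot k (α k) = 2)
    (hΦrefl : ∀ β ∈ Φ, ∀ k, β - coroot k β • α k ∈ Φ) (k : ι) :
    Module.reflection (hdiag k) • Φ = Φ := by
  rw [← Set.image_smul]
  refine (Module.bijOn_reflection_of_mapsTo (hdiag k) fun β hβ => ?_).image_eq
  simpa [Module.reflection_apply] using hΦrefl β hβ k

theorem eq_zero_of_mem_span_of_forall_coroot_eq_zero [IsAddTorsionFree V]
    (hdiag : ∀ k, coroot k (α k) = 2) (hΦfin : Φ.Finite) (hΦspan : span K Φ = ⊤)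
    (hΦrefl : ∀ β ∈ Φ, ∀ k, β - coroot k β • α k ∈ Φ) {I : Set ι} {w : V}
    (hw : w ∈ span K (α '' I)) (hker : ∀ k ∈ I, coroot k w = 0) : w = 0 := by
  let G := MulAction.stabilizer (V ≃ₗ[K] V) Φ ⊓ MulAction.stabilizer (V ≃ₗ[K] V) w
  have : Finite G := have := finite_stabilizer_of_span_eq_top_s12 hΦfin hΦspan
    Finite.of_injective _ (Subgroup.inclusion_injective inf_le_left)
  refine eq_zero_of_forall_fixed_of_mem_span_negated (G := G) (fun g hg => hg.2) ?_
  refine span_mono ?_ hw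
  rintro _ ⟨k, hk, rfl⟩
  refine ⟨Module.reflection (hdiag k), ⟨reflection_smul_eq_self hdiag hΦrefl k, ?_⟩, by simp⟩
  simp [MulAction.mem_stabilizer_iff, Module.reflection_apply, hker k hk]

end RootSystem

theorem Module.Basis.mem_span_image_of_forall_dual_eq_zero {ι K V : Type*} [DecidableEq ι] [Semiring K]
    [AddCommMonoid V] [Module K V] (b : Module.Basis ι K V) {x : ι → Module.Dual K V}
    (hx : ∀ i j, x j (b i) = if i = j then 1 else 0) {s : Set ι} {y : V}
    (hy : ∀ j ∉ s, x j y = 0) : y ∈ span K (b '' s) := by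
  have hcoord (j : ι) : x j = b.coord j := b.ext fun i => by
    simp [hx i j, Finsupp.single_apply, eq_comm]
  refine b.mem_span_image.mpr fun j hj => ?_
  by_contra hjs
  exact (Finsupp.mem_support_iff.mp hj) (by simpa [hcoord] using hy j hjs)

theorem stmt_12_general {V : Type*} [AddCommGroup V] [Module ℚ V] {r : ℕ}
    (b : Module.Basis (Fin r) ℚ V) (coroot : Fin r → Module.Dual ℚ V)
    (hdiag : ∀ i, coroot i (b i) = 2)
    (Φ : Set V) (hΦfin : Φ.Finite) (hΦroot : ∀ i, b i ∈ Φ)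
    (hΦrefl : ∀ β ∈ Φ, ∀ i, β - coroot i β • b i ∈ Φ)
    (x : Fin r → Module.Dual ℚ V)
    (hx : ∀ i j : Fin r, x j (b i) = if i = j then 1 else 0)
    (ϖ : Fin r → V)
    (hϖ : ∀ i j : Fin r, coroot j (ϖ i) = if i = j then 1 else 0)
    (i : Fin r) (I I₁ I₂ : Finset (Fin r))
    (hI : I = I₁ ∪ I₂) (hdisj : Disjoint I₁ I₂)
    (horth : ∀ a ∈ I₁, ∀ c ∈ I₂, coroot c (b a) = 0)
    (hi : i ∈ I₁)
    (v : V) (hvI : ∀ k ∈ I, coroot k v = 0)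
    (hvJ : ∀ j ∈ Iᶜ, x j (ϖ i - v) = 0)
    (v₁ : V) (hv₁I : ∀ k ∈ I₁, coroot k v₁ = 0)
    (hv₁J : ∀ j ∈ I₁ᶜ, x j (ϖ i - v₁) = 0) :
    v = v₁ := by
  have := IsAddTorsionFree.of_module_rat (M := V)
  have hΦspan : span ℚ Φ = ⊤ :=
    eq_top_iff.mpr (b.span_eq ▸ span_mono (Set.range_subset_iff.mpr hΦroot))
  have hv : ϖ i - v ∈ span ℚ (b '' I) :=
    b.mem_span_image_of_forall_dual_eq_zero hx fun j hj => hvJ j (Finset.mem_compl.mpr hj)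
  have hv₁ : ϖ i - v₁ ∈ span ℚ (b '' I₁) :=
    b.mem_span_image_of_forall_dual_eq_zero hx fun j hj => hv₁J j (Finset.mem_compl.mpr hj)
  have hv₁I₂ (c : Fin r) (hc : c ∈ I₂) : coroot c v₁ = 0 := by
    have hker : span ℚ (b '' I₁) ≤ LinearMap.ker (coroot c) :=
      span_le.mpr fun _ ⟨a, ha, hab⟩ => hab ▸ horth a ha c hc
    have hic : i ≠ c := fun h => Finset.disjoint_left.mp hdisj hi (h ▸ hc)
    simpa [hϖ i c, hic] using hker hv₁
  have hI₁I : (I₁ : Set (Fin r)) ⊆ I := by simp [hI]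
  have hw : v - v₁ ∈ span ℚ (b '' I) := by
    simpa using sub_mem (span_mono (Set.image_mono hI₁I) hv₁) hv
  refine sub_eq_zero.mp <| eq_zero_of_mem_span_of_forall_coroot_eq_zero hdiag hΦfin hΦspan
    hΦrefl hw fun k hk => ?_
  rcases Finset.mem_union.mp (hI ▸ hk) with hk₁ | hk₂
  · simp [hvI k hk, hv₁I k hk₁]
  · simp [hvI k hk, hv₁I₂ k hk₂]

/-- Suppose `I ⊆ {1, …, r}` decomposes as a disjoint union
`I = I₁ ⊔ I₂` with `⟨α_a, α_c^∨⟩ = 0` for all `a ∈ I₁` and `c ∈ I₂`, and suppose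
`i ∈ I₁`.  Then `v_{I,Iᶜ}(ϖ_i) = v_{I₁,I₁ᶜ}(ϖ_i)`: if `v` solves the defining system for
`(I, Iᶜ)` and `v₁` solves the system for `(I₁, I₁ᶜ)` (both with weight `ϖ_i`), then
`v = v₁`. -/
theorem stmt_12 {V : Type*} [AddCommGroup V] [Module ℚ V] {r : ℕ}
    (b : Module.Basis (Fin r) ℚ V) (coroot : Fin r → Module.Dual ℚ V)
    (hdiag : ∀ i, coroot i (b i) = 2)
    (hoff : ∀ i j : Fin r, i ≠ j → coroot j (b i) ≤ 0)
    (hint : ∀ i j : Fin r, ∃ n : ℤ, coroot j (b i) = (n : ℚ))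
    (Φ : Set V) (hΦfin : Φ.Finite) (hΦroot : ∀ i, b i ∈ Φ)
    (hΦrefl : ∀ β ∈ Φ, ∀ i, β - coroot i β • b i ∈ Φ)
    (x : Fin r → Module.Dual ℚ V)
    (hx : ∀ i j : Fin r, x j (b i) = if i = j then 1 else 0)
    (ϖ : Fin r → V)
    (hϖ : ∀ i j : Fin r, coroot j (ϖ i) = if i = j then 1 else 0)
    (i : Fin r) (I I₁ I₂ : Finset (Fin r))
    (hI : I = I₁ ∪ I₂) (hdisj : Disjoint I₁ I₂)
    (horth : ∀ a ∈ I₁, ∀ c ∈ I₂, coroot c (b a) = 0)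
    (hi : i ∈ I₁)
    (v : V) (hvI : ∀ k ∈ I, coroot k v = 0)
    (hvJ : ∀ j ∈ Iᶜ, x j (ϖ i - v) = 0)
    (v₁ : V) (hv₁I : ∀ k ∈ I₁, coroot k v₁ = 0)
    (hv₁J : ∀ j ∈ I₁ᶜ, x j (ϖ i - v₁) = 0) :
    v = v₁ :=
  stmt_12_general b coroot hdiag Φ hΦfin hΦroot hΦrefl x hx ϖ hϖ i I I₁ I₂ hI hdisj horth hi v hvI
    hvJ v₁ hv₁I hv₁J
end
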